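/- arXiv:2012.13691 — 10 statements merged into one kernel-verified Lean document; each statement's English description precedes it below -/
import Mathlib

section
/- For all real numbers b ≥ b' ≥ π, the integral C₀⁻(b,b') = ∫₀^∞ t(1 - e^{-t}) / ((t² + b²)(t² + b'²)) dt satisfies C₀⁻(b,b') ≤ (log b - log b')/(b² - b'²), where for b = b' the right-hand side is interpreted as its limit 1/(2b²). -/
/-! Since `0 ≤ 1 - e^{-t} ≤ 1`, the integral is at most `∫₀^∞ t / ((t² + a)(t² + c)) dt` with
`a = b²`, `c = b'²`, which has the closed form `(log a - log c) / (2 (a - c))` (resp. `1 / (2a)`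
for `a = c`): an antiderivative is `log ((t² + c)/(t² + a)) / (2 (a - c))`
(resp. `-1 / (2 (t² + a))`), vanishing at infinity. -/

open Real MeasureTheory Set Filter Topology

section
variable {a c : ℝ}

lemma hasDerivAt_neg_inv_two_mul_sq_add (ha : 0 < a) (t : ℝ) :
    HasDerivAt (fun t : ℝ => -1 / (2 * (t ^ 2 + a))) (t / ((t ^ 2 + a) * (t ^ 2 + a))) t := by
  have hpos : 0 < t ^ 2 + a := by positivity
  refine ((hasDerivAt_const t (-1 : ℝ)).div
    (((hasDerivAt_pow 2 t).add_const a).const_mul 2) (by positivity)).congr_deriv ?_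
  field_simp
  ring

lemma hasDerivAt_log_div_sq_add (ha : 0 < a) (hc : 0 < c) (hac : a ≠ c) (t : ℝ) :
    HasDerivAt (fun t : ℝ => log ((t ^ 2 + c) / (t ^ 2 + a)) / (2 * (a - c)))
      (t / ((t ^ 2 + a) * (t ^ 2 + c))) t := by
  have hpos_a : 0 < t ^ 2 + a := by positivity
  have hpos_c : 0 < t ^ 2 + c := by positivity
  refine ((((hasDerivAt_pow 2 t).add_const c).div ((hasDerivAt_pow 2 t).add_const a)
    hpos_a.ne').log (div_pos hpos_c hpos_a).ne').div_const (2 * (a - c)) |>.congr_deriv ?_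
  simp only [Pi.div_apply]
  field_simp
  ring

lemma tendsto_neg_inv_two_mul_sq_add (a : ℝ) :
    Tendsto (fun t : ℝ => -1 / (2 * (t ^ 2 + a))) atTop (𝓝 0) :=
  tendsto_const_nhds.div_atTop <|
    (tendsto_atTop_add_const_right _ a (tendsto_pow_atTop two_ne_zero)).const_mul_atTop two_pos

lemma tendsto_log_div_sq_add (a c : ℝ) :
    Tendsto (fun t : ℝ => log ((t ^ 2 + c) / (t ^ 2 + a)) / (2 * (a - c))) atTop (𝓝 0) := by
  have hden : Tendsto (fun t : ℝ => t ^ 2 + a) atTop atTop :=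
    tendsto_atTop_add_const_right _ a (tendsto_pow_atTop two_ne_zero)
  have hratio : Tendsto (fun t : ℝ => (t ^ 2 + c) / (t ^ 2 + a)) atTop (𝓝 1) := by
    have := (tendsto_const_nhds (x := c - a)).div_atTop hden |>.const_add 1
    rw [add_zero] at this
    refine this.congr' ?_
    filter_upwards [hden.eventually_gt_atTop 0] with t ht
    field_simp
    ring
  simpa using (hratio.log one_ne_zero).div_const (2 * (a - c))

lemma integrableOn_and_integral_Ioi_div_sq_add_mul_sq_add (ha : 0 < a) (hc : 0 < c) :
    IntegrableOn (fun t : ℝ => t / ((t ^ 2 + a) * (t ^ 2 + c))) (Ioi 0) ∧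
      ∫ t in Ioi (0 : ℝ), t / ((t ^ 2 + a) * (t ^ 2 + c)) =
        if a = c then 1 / (2 * a) else (log a - log c) / (2 * (a - c)) := by
  obtain ⟨F, hF, hFlim, hF0⟩ : ∃ F : ℝ → ℝ,
      (∀ t ∈ Ici (0 : ℝ), HasDerivAt F (t / ((t ^ 2 + a) * (t ^ 2 + c))) t) ∧
      Tendsto F atTop (𝓝 0) ∧
      0 - F 0 = if a = c then 1 / (2 * a) else (log a - log c) / (2 * (a - c)) := by
    split_ifs with hac
    · subst hac
      refine ⟨_, fun t _ => hasDerivAt_neg_inv_two_mul_sq_add ha t,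
        tendsto_neg_inv_two_mul_sq_add a, ?_⟩
      ring
    · refine ⟨_, fun t _ => hasDerivAt_log_div_sq_add ha hc hac t,
        tendsto_log_div_sq_add a c, ?_⟩
      simp only [zero_pow two_ne_zero, zero_add, log_div hc.ne' ha.ne']
      ring
  have hnonneg : ∀ t ∈ Ioi (0 : ℝ), 0 ≤ t / ((t ^ 2 + a) * (t ^ 2 + c)) :=
    fun t (ht : 0 < t) => by positivity
  exact ⟨integrableOn_Ioi_deriv_of_nonneg' hF hnonneg hFlim,
    hF0 ▸ integral_Ioi_of_hasDerivAt_of_nonneg' hF hnonneg hFlim⟩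

end

lemma setIntegral_Ioi_mul_one_sub_exp_neg_le {f : ℝ → ℝ} (hf : IntegrableOn f (Ioi 0))
    (hf_nonneg : ∀ t ∈ Ioi (0 : ℝ), 0 ≤ f t) :
    ∫ t in Ioi (0 : ℝ), f t * (1 - exp (-t)) ≤ ∫ t in Ioi (0 : ℝ), f t := by
  have hle : ∀ t ∈ Ioi (0 : ℝ), f t * (1 - exp (-t)) ≤ f t := fun t ht =>
    mul_le_of_le_one_right (hf_nonneg t ht) (sub_le_self _ (exp_pos _).le)
  have hint : IntegrableOn (fun t => f t * (1 - exp (-t))) (Ioi 0) := by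
    refine hf.mono' (hf.aestronglyMeasurable.mul (by fun_prop : Continuous fun t : ℝ =>
      1 - exp (-t)).aestronglyMeasurable) ?_
    filter_upwards [ae_restrict_mem measurableSet_Ioi] with t (ht : 0 < t)
    have h1 : 0 ≤ 1 - exp (-t) := sub_nonneg.mpr (exp_le_one_iff.mpr (neg_nonpos.mpr ht.le))
    rw [norm_of_nonneg (mul_nonneg (hf_nonneg t ht) h1)]
    exact hle t ht
  exact setIntegral_mono_on hint hf measurableSet_Ioi hle

/-- For all `b ≥ b' ≥ π`, `C₀⁻(b,b') = ∫₀^∞ t(1-e^{-t})/((t²+b²)(t²+b'²)) dt`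
satisfies `C₀⁻(b,b') ≤ (log b - log b')/(b² - b'²)`, where for `b = b'` the
right-hand side is interpreted as its limit `1/(2b²)`. -/
theorem stmt_1 (b b' : ℝ) (hbb : b' ≤ b) (hb' : π ≤ b') :
    ∫ t in Ioi (0 : ℝ), t * (1 - Real.exp (-t)) / ((t ^ 2 + b ^ 2) * (t ^ 2 + b' ^ 2)) ≤
      if b = b' then 1 / (2 * b ^ 2)
      else (Real.log b - Real.log b') / (b ^ 2 - b' ^ 2) := by
  have hb'0 : 0 < b' := pi_pos.trans_le hb'
  have hb0 : 0 < b := hb'0.trans_le hbb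
  obtain ⟨hint, hval⟩ :=
    integrableOn_and_integral_Ioi_div_sq_add_mul_sq_add (pow_pos hb0 2) (pow_pos hb'0 2)
  have hnonneg : ∀ t ∈ Ioi (0 : ℝ), 0 ≤ t / ((t ^ 2 + b ^ 2) * (t ^ 2 + b' ^ 2)) :=
    fun t (ht : 0 < t) => by positivity
  calc _ = ∫ t in Ioi (0 : ℝ), t / ((t ^ 2 + b ^ 2) * (t ^ 2 + b' ^ 2)) * (1 - exp (-t)) := by
        simp_rw [mul_div_right_comm]
    _ ≤ _ := setIntegral_Ioi_mul_one_sub_exp_neg_le hint hnonneg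
    _ = _ := by
        simp only [hval, pow_left_inj₀ hb0.le hb'0.le two_ne_zero, log_pow]
        split_ifs
        · rfl
        · field_simp
          ring
end

section
/- For all real numbers b ≥ b' ≥ π, the integral C₀⁺(b,b') = ∫₀^∞ t(1 + e^{-t}) / ((t² + b²)(t² + b'²)) dt satisfies C₀⁺(b,b') ≤ (log b - log b')/(b² - b'²) + 1/(b² b'²), where for b = b' the first term on the right is interpreted as its limit 1/(2b²). -/
open Real MeasureTheory Set Filter Topology

/-!
Split `1 + e^{-t}`. The rational part `t / ((t² + b²)(t² + b'²))` has the elementary antiderivative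
`(log (t² + b'²) - log (t² + b²)) / (2(b² - b'²))`, or `-1 / (2(t² + b²))` when `b = b'`, which
gives the first term exactly. In the exponential part the denominator is at least `b²b'²`, and
`∫₀^∞ t e^{-t} dt = Γ(2) = 1`.
-/

theorem integrableOn_Ioi_mul_exp_neg : IntegrableOn (fun t : ℝ => t * exp (-t)) (Ioi 0) :=
  (GammaIntegral_convergent two_pos).congr_fun (fun t _ => by norm_num [mul_comm])
    measurableSet_Ioi

theorem integral_Ioi_mul_exp_neg : ∫ t in Ioi (0 : ℝ), t * exp (-t) = 1 := by
  have h := Gamma_eq_integral two_pos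
  norm_num at h
  simpa [mul_comm] using h.symm

theorem div_sq_add_sq_mul_sq_add_sq_nonneg {x : ℝ} (hx : 0 ≤ x) (b c : ℝ) :
    0 ≤ x / ((x ^ 2 + b ^ 2) * (x ^ 2 + c ^ 2)) :=
  div_nonneg hx (by positivity)

theorem tendsto_neg_inv_two_mul_sq_add_sq (b : ℝ) :
    Tendsto (fun t : ℝ => -(2 * (t ^ 2 + b ^ 2))⁻¹) atTop (𝓝 0) := by
  have h : Tendsto (fun t : ℝ => 2 * (t ^ 2 + b ^ 2)) atTop atTop :=
    (tendsto_atTop_add_const_right _ _ (tendsto_pow_atTop two_ne_zero)).const_mul_atTop two_pos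
  simpa using h.inv_tendsto_atTop.neg

section
variable {b c : ℝ}

theorem hasDerivAt_neg_inv_two_mul_sq_add_sq (hb : b ≠ 0) (x : ℝ) :
    HasDerivAt (fun t => -(2 * (t ^ 2 + b ^ 2))⁻¹) (x / ((x ^ 2 + b ^ 2) * (x ^ 2 + b ^ 2))) x := by
  have hpos : 0 < x ^ 2 + b ^ 2 := by positivity
  have h := ((((hasDerivAt_pow 2 x).add_const (b ^ 2)).const_mul 2).inv (by positivity)).neg
  exact h.congr_deriv (by field_simp; ring)

theorem hasDerivAt_log_sub_log_div (hb : b ≠ 0) (hc : c ≠ 0) (hbc : b ^ 2 ≠ c ^ 2) (x : ℝ) :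
    HasDerivAt (fun t => (log (t ^ 2 + c ^ 2) - log (t ^ 2 + b ^ 2)) / (2 * (b ^ 2 - c ^ 2)))
      (x / ((x ^ 2 + b ^ 2) * (x ^ 2 + c ^ 2))) x := by
  have hb' : 0 < x ^ 2 + b ^ 2 := by positivity
  have hc' : 0 < x ^ 2 + c ^ 2 := by positivity
  have hlog (d : ℝ) (hd : 0 < x ^ 2 + d ^ 2) :=
    ((hasDerivAt_pow 2 x).add_const (d ^ 2)).log hd.ne'
  have : b ^ 2 - c ^ 2 ≠ 0 := sub_ne_zero.mpr hbc
  exact (((hlog c hc').sub (hlog b hb')).div_const (2 * (b ^ 2 - c ^ 2))).congr_deriv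
    (by field_simp; ring)

theorem tendsto_log_sub_log_div (hb : b ≠ 0) (hc : c ≠ 0) :
    Tendsto (fun t => (log (t ^ 2 + c ^ 2) - log (t ^ 2 + b ^ 2)) / (2 * (b ^ 2 - c ^ 2)))
      atTop (𝓝 0) := by
  have hden : Tendsto (fun t : ℝ => t ^ 2 + b ^ 2) atTop atTop :=
    tendsto_atTop_add_const_right _ _ (tendsto_pow_atTop two_ne_zero)
  have hratio : Tendsto (fun t : ℝ => 1 + (c ^ 2 - b ^ 2) / (t ^ 2 + b ^ 2)) atTop (𝓝 1) := by
    simpa using tendsto_const_nhds.add (tendsto_const_nhds.div_atTop hden)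
  have hlog := (continuousAt_log one_ne_zero).tendsto.comp hratio
  rw [log_one] at hlog
  have hdiff : Tendsto (fun t : ℝ => log (t ^ 2 + c ^ 2) - log (t ^ 2 + b ^ 2)) atTop (𝓝 0) := by
    refine hlog.congr fun t => ?_
    have hb' : 0 < t ^ 2 + b ^ 2 := by positivity
    have hc' : 0 < t ^ 2 + c ^ 2 := by positivity
    rw [Function.comp_apply, ← log_div hc'.ne' hb'.ne']
    congr 1
    field_simp
    ring
  simpa using hdiff.div_const (2 * (b ^ 2 - c ^ 2))

theorem integrableOn_Ioi_div_sq_add_sq_mul_sq_add_sq (hb : 0 < b) (hc : 0 < c) :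
    IntegrableOn (fun t => t / ((t ^ 2 + b ^ 2) * (t ^ 2 + c ^ 2))) (Ioi 0) := by
  have hnonneg : ∀ x ∈ Ioi (0 : ℝ), 0 ≤ x / ((x ^ 2 + b ^ 2) * (x ^ 2 + c ^ 2)) :=
    fun x hx => div_sq_add_sq_mul_sq_add_sq_nonneg (le_of_lt hx) b c
  rcases eq_or_ne b c with rfl | hbc
  · exact integrableOn_Ioi_deriv_of_nonneg'
      (fun x _ => hasDerivAt_neg_inv_two_mul_sq_add_sq hb.ne' x) hnonneg
      (tendsto_neg_inv_two_mul_sq_add_sq b)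
  · have hbc2 : b ^ 2 ≠ c ^ 2 := by
      rwa [Ne, sq_eq_sq₀ hb.le hc.le]
    exact integrableOn_Ioi_deriv_of_nonneg'
      (fun x _ => hasDerivAt_log_sub_log_div hb.ne' hc.ne' hbc2 x) hnonneg
      (tendsto_log_sub_log_div hb.ne' hc.ne')

theorem integral_Ioi_div_sq_add_sq_mul_self (hb : 0 < b) :
    ∫ t in Ioi (0 : ℝ), t / ((t ^ 2 + b ^ 2) * (t ^ 2 + b ^ 2)) = 1 / (2 * b ^ 2) := by
  rw [integral_Ioi_of_hasDerivAt_of_nonneg'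
    (fun x _ => hasDerivAt_neg_inv_two_mul_sq_add_sq hb.ne' x)
    (fun x hx => div_sq_add_sq_mul_sq_add_sq_nonneg (le_of_lt hx) b b)
    (tendsto_neg_inv_two_mul_sq_add_sq b)]
  simp

theorem integral_Ioi_div_sq_add_sq_mul_sq_add_sq_of_ne (hb : 0 < b) (hc : 0 < c) (hbc : b ≠ c) :
    ∫ t in Ioi (0 : ℝ), t / ((t ^ 2 + b ^ 2) * (t ^ 2 + c ^ 2)) =
      (log b - log c) / (b ^ 2 - c ^ 2) := by
  have hbc2 : b ^ 2 ≠ c ^ 2 := by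
    rwa [Ne, sq_eq_sq₀ hb.le hc.le]
  rw [integral_Ioi_of_hasDerivAt_of_nonneg'
    (fun x _ => hasDerivAt_log_sub_log_div hb.ne' hc.ne' hbc2 x)
    (fun x hx => div_sq_add_sq_mul_sq_add_sq_nonneg (le_of_lt hx) b c)
    (tendsto_log_sub_log_div hb.ne' hc.ne')]
  simp only [ne_eq, OfNat.ofNat_ne_zero, not_false_eq_true, zero_pow, zero_add, log_pow]
  have := sub_ne_zero.mpr hbc2
  field_simp
  ring

theorem div_le_div_sq_mul_sq {a : ℝ} (ha : 0 ≤ a) (hb : b ≠ 0) (hc : c ≠ 0) (x : ℝ) :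
    a / ((x ^ 2 + b ^ 2) * (x ^ 2 + c ^ 2)) ≤ a / (b ^ 2 * c ^ 2) := by
  gcongr <;> nlinarith [sq_nonneg x]

theorem integrableOn_Ioi_mul_exp_neg_div (hb : b ≠ 0) (hc : c ≠ 0) :
    IntegrableOn (fun t => t * exp (-t) / ((t ^ 2 + b ^ 2) * (t ^ 2 + c ^ 2))) (Ioi 0) := by
  refine (integrableOn_Ioi_mul_exp_neg.div_const (b ^ 2 * c ^ 2)).mono'
    (Measurable.aestronglyMeasurable (by fun_prop)) ?_
  filter_upwards [ae_restrict_mem measurableSet_Ioi] with x hx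
  have hx0 : 0 ≤ x * exp (-x) := mul_nonneg (le_of_lt hx) (exp_pos _).le
  rw [norm_of_nonneg (div_nonneg hx0 (by positivity))]
  exact div_le_div_sq_mul_sq hx0 hb hc x

theorem integral_Ioi_mul_exp_neg_div_le (hb : b ≠ 0) (hc : c ≠ 0) :
    ∫ t in Ioi (0 : ℝ), t * exp (-t) / ((t ^ 2 + b ^ 2) * (t ^ 2 + c ^ 2)) ≤ 1 / (b ^ 2 * c ^ 2) :=
  calc _ ≤ ∫ t in Ioi (0 : ℝ), t * exp (-t) / (b ^ 2 * c ^ 2) :=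
        setIntegral_mono_on (integrableOn_Ioi_mul_exp_neg_div hb hc)
          (integrableOn_Ioi_mul_exp_neg.div_const _) measurableSet_Ioi fun x hx =>
            div_le_div_sq_mul_sq (mul_nonneg (le_of_lt hx) (exp_pos _).le) hb hc x
    _ = 1 / (b ^ 2 * c ^ 2) := by rw [integral_div, integral_Ioi_mul_exp_neg]

end

/-- For all `b ≥ b' ≥ π`, `C₀⁺(b,b') = ∫₀^∞ t(1+e^{-t})/((t²+b²)(t²+b'²)) dt`
satisfies `C₀⁺(b,b') ≤ (log b - log b')/(b² - b'²) + 1/(b²b'²)`, where for `b = b'`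
the first term on the right is interpreted as its limit `1/(2b²)`. -/
theorem stmt_2 (b b' : ℝ) (hbb : b' ≤ b) (hb' : π ≤ b') :
    ∫ t in Ioi (0 : ℝ), t * (1 + Real.exp (-t)) / ((t ^ 2 + b ^ 2) * (t ^ 2 + b' ^ 2)) ≤
      (if b = b' then 1 / (2 * b ^ 2)
        else (Real.log b - Real.log b') / (b ^ 2 - b' ^ 2)) + 1 / (b ^ 2 * b' ^ 2) := by
  have hb'0 : 0 < b' := pi_pos.trans_le hb'
  have hb0 : 0 < b := hb'0.trans_le hbb
  have hsplit : (fun t : ℝ => t * (1 + exp (-t)) / ((t ^ 2 + b ^ 2) * (t ^ 2 + b' ^ 2))) =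
      fun t => t / ((t ^ 2 + b ^ 2) * (t ^ 2 + b' ^ 2)) +
        t * exp (-t) / ((t ^ 2 + b ^ 2) * (t ^ 2 + b' ^ 2)) := by
    ext t
    ring
  rw [hsplit, integral_add (integrableOn_Ioi_div_sq_add_sq_mul_sq_add_sq hb0 hb'0)
    (integrableOn_Ioi_mul_exp_neg_div hb0.ne' hb'0.ne')]
  gcongr
  · split_ifs with h
    · subst h
      exact (integral_Ioi_div_sq_add_sq_mul_self hb0).le
    · exact (integral_Ioi_div_sq_add_sq_mul_sq_add_sq_of_ne hb0 hb'0 h).le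
  · exact integral_Ioi_mul_exp_neg_div_le hb0.ne' hb'0.ne'
end

section
/- The improper integral ∫₀^∞ (log x)/(x² - 1) dx converges and equals π²/4; in particular it is bounded above by π²/4 ≤ 5/2. -/
/-!
On `(1, ∞)` expand `log x / (x² - 1) = ∑ₙ log x / x^(2n+2)`; all terms are nonnegative, so the
series may be integrated termwise, and `∫₁^∞ log x / x^(k+1) dx = 1 / k²` gives
`∑ₙ 1 / (2n+1)² = π² / 8`. The integrand `f` satisfies `f (1/x) / x² = f x`, so the substitution
`x ↦ 1/x` shows that the integral over `(0, 1)` is also `π² / 8`.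
-/

open Real MeasureTheory Set Filter Topology

theorem MeasureTheory.integrable_and_hasSum_integral_of_nonneg {α ι : Type*} [MeasurableSpace α]
    {μ : Measure α} [Countable ι] {F : ι → α → ℝ} {f : α → ℝ}
    (hF : ∀ i, Integrable (F i) μ) (hF_nonneg : ∀ i, 0 ≤ᵐ[μ] F i)
    (hF_sum : Summable fun i ↦ ∫ a, F i a ∂μ) (hf : ∀ᵐ a ∂μ, HasSum (F · a) (f a)) :
    Integrable f μ ∧ HasSum (fun i ↦ ∫ a, F i a ∂μ) (∫ a, f a ∂μ) := by
  have hf_nonneg : 0 ≤ᵐ[μ] f := by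
    filter_upwards [hf, ae_all_iff.2 hF_nonneg] with a ha h0 using ha.nonneg h0
  have hf_meas : AEStronglyMeasurable f μ :=
    aestronglyMeasurable_of_tendsto_ae atTop
      (fun s ↦ Finset.aestronglyMeasurable_fun_sum s fun i _ ↦ (hF i).1) hf
  have hlint : ∫⁻ a, ENNReal.ofReal (f a) ∂μ = ENNReal.ofReal (∑' i, ∫ a, F i a ∂μ) :=
    calc ∫⁻ a, ENNReal.ofReal (f a) ∂μ = ∫⁻ a, ∑' i, ENNReal.ofReal (F i a) ∂μ := by
          refine lintegral_congr_ae ?_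
          filter_upwards [hf, ae_all_iff.2 hF_nonneg] with a ha h0
          rw [← ha.tsum_eq, ENNReal.ofReal_tsum_of_nonneg h0 ha.summable]
      _ = ∑' i, ∫⁻ a, ENNReal.ofReal (F i a) ∂μ :=
          lintegral_tsum fun i ↦ (hF i).1.aemeasurable.ennreal_ofReal
      _ = ∑' i, ENNReal.ofReal (∫ a, F i a ∂μ) := by
          simp_rw [ofReal_integral_eq_lintegral_ofReal (hF _) (hF_nonneg _)]
      _ = ENNReal.ofReal (∑' i, ∫ a, F i a ∂μ) :=
          (ENNReal.ofReal_tsum_of_nonneg (fun i ↦ integral_nonneg_of_ae (hF_nonneg i)) hF_sum).symm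
  refine ⟨⟨hf_meas, (hasFiniteIntegral_iff_ofReal hf_nonneg).2 (hlint ▸ ENNReal.ofReal_lt_top)⟩, ?_⟩
  rw [integral_eq_lintegral_of_nonneg_ae hf_nonneg hf_meas, hlint,
    ENNReal.toReal_ofReal (tsum_nonneg fun i ↦ integral_nonneg_of_ae (hF_nonneg i))]
  exact hF_sum.hasSum

section InvSubstitution

variable {E : Type*} [NormedAddCommGroup E] [NormedSpace ℝ E] {a : ℝ}

theorem hasDerivWithinAt_inv_Ioi (ha : 0 < a) :
    ∀ x ∈ Ioi a, HasDerivWithinAt (·⁻¹) (-(x ^ 2)⁻¹) (Ioi a) x := fun _ hx ↦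
  (hasDerivAt_inv (ha.trans hx).ne').hasDerivWithinAt

theorem integrableOn_Ioo_zero_inv_iff (ha : 0 < a) (g : ℝ → E) :
    IntegrableOn g (Ioo 0 a⁻¹) ↔ IntegrableOn (fun x ↦ (x ^ 2)⁻¹ • g x⁻¹) (Ioi a) := by
  rw [← inv_Ioi₀ ha, ← image_inv_eq_inv, integrableOn_image_iff_integrableOn_abs_deriv_smul
    measurableSet_Ioi (hasDerivWithinAt_inv_Ioi ha) inv_injective.injOn]
  simp_rw [abs_neg, abs_inv, abs_sq]

theorem integral_Ioo_zero_inv_eq (ha : 0 < a) (g : ℝ → E) :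
    ∫ x in Ioo 0 a⁻¹, g x = ∫ x in Ioi a, (x ^ 2)⁻¹ • g x⁻¹ := by
  rw [← inv_Ioi₀ ha, ← image_inv_eq_inv, integral_image_eq_integral_abs_deriv_smul
    measurableSet_Ioi (hasDerivWithinAt_inv_Ioi ha) inv_injective.injOn]
  simp_rw [abs_neg, abs_inv, abs_sq]

end InvSubstitution

theorem hasSum_one_div_two_mul_add_one_sq :
    HasSum (fun n : ℕ ↦ 1 / (2 * n + 1 : ℝ) ^ 2) (π ^ 2 / 8) := by
  have hinj : Function.Injective fun n : ℕ ↦ 2 * n + 1 := fun m n h ↦ by simpa using h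
  have hodd : Summable fun n : ℕ ↦ 1 / ((2 * n + 1 : ℕ) : ℝ) ^ 2 :=
    hasSum_zeta_two.summable.comp_injective hinj
  have heven : HasSum (fun n : ℕ ↦ 1 / ((2 * n : ℕ) : ℝ) ^ 2) (π ^ 2 / 24) := by
    have h := hasSum_zeta_two.mul_left (1 / 4)
    rw [show (1 / 4 : ℝ) * (π ^ 2 / 6) = π ^ 2 / 24 by ring] at h
    refine h.congr_fun fun n ↦ ?_
    rw [Nat.cast_mul, Nat.cast_ofNat]
    ring
  have hsum := hasSum_zeta_two.unique
    (HasSum.even_add_odd (f := fun n : ℕ ↦ 1 / (n : ℝ) ^ 2) heven hodd.hasSum)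
  have hodd_sum : ∑' n : ℕ, 1 / ((2 * n + 1 : ℕ) : ℝ) ^ 2 = π ^ 2 / 8 := by linarith
  rw [← hodd_sum]
  exact_mod_cast hodd.hasSum

theorem integrableOn_Ioi_one_log_div_pow_succ_and_integral {k : ℕ} (hk : k ≠ 0) :
    IntegrableOn (fun x : ℝ ↦ log x / x ^ (k + 1)) (Ioi 1) ∧
      ∫ x in Ioi (1 : ℝ), log x / x ^ (k + 1) = 1 / (k : ℝ) ^ 2 := by
  set G : ℝ → ℝ := fun x ↦ -(log x / k + 1 / (k : ℝ) ^ 2) / x ^ k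
  have hk' : (k : ℝ) ≠ 0 := Nat.cast_ne_zero.2 hk
  have hderiv : ∀ x ∈ Ici (1 : ℝ), HasDerivAt G (log x / x ^ (k + 1)) x := by
    intro x hx
    have hx0 : x ≠ 0 := (zero_lt_one.trans_le hx).ne'
    have h := ((((hasDerivAt_log hx0).div_const k).add_const (1 / (k : ℝ) ^ 2)).neg).div
      (hasDerivAt_pow k x) (pow_ne_zero k hx0)
    refine h.congr_deriv ?_
    obtain ⟨j, rfl⟩ := Nat.exists_eq_add_one_of_ne_zero hk
    simp only [Pi.neg_apply, Nat.add_sub_cancel]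
    field_simp
    ring
  have hnonneg : ∀ x ∈ Ioi (1 : ℝ), 0 ≤ log x / x ^ (k + 1) := fun x hx ↦
    div_nonneg (log_nonneg hx.le) (pow_nonneg (zero_le_one.trans hx.le) _)
  have hlim : Tendsto G atTop (𝓝 0) := by
    have hlog : Tendsto (fun x : ℝ ↦ log x / x ^ k) atTop (𝓝 0) := by
      simpa using (isLittleO_log_rpow_atTop (r := k) (by positivity)).tendsto_div_nhds_zero
    have hinv : Tendsto (fun x : ℝ ↦ (x ^ k)⁻¹) atTop (𝓝 0) :=
      (tendsto_pow_atTop hk).inv_tendsto_atTop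
    convert ((hlog.div_const k).add (hinv.const_mul (1 / (k : ℝ) ^ 2))).neg using 2 with x
    · simp only [G]; ring
    · simp
  refine ⟨integrableOn_Ioi_deriv_of_nonneg' hderiv hnonneg hlim, ?_⟩
  rw [integral_Ioi_of_hasDerivAt_of_nonneg' hderiv hnonneg hlim]
  simp [G]

theorem hasSum_log_div_pow_two_mul_add_two {x : ℝ} (hx : 1 < x) :
    HasSum (fun n : ℕ ↦ log x / x ^ (2 * n + 2)) (log x / (x ^ 2 - 1)) := by
  have hx2 : 1 < x ^ 2 := one_lt_pow₀ hx two_ne_zero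
  have h := (hasSum_geometric_of_lt_one (by positivity) (inv_lt_one_of_one_lt₀ hx2)).mul_left
    (log x / x ^ 2)
  rw [show log x / (x ^ 2 - 1) = log x / x ^ 2 * (1 - (x ^ 2)⁻¹)⁻¹ by
    field_simp]
  exact h.congr_fun fun n ↦ by rw [pow_add, pow_mul, inv_pow]; field_simp

theorem inv_sq_mul_log_inv_div (x : ℝ) :
    (x ^ 2)⁻¹ * (log x⁻¹ / (x⁻¹ ^ 2 - 1)) = log x / (x ^ 2 - 1) := by
  rcases eq_or_ne x 0 with rfl | hx0
  · simp
  rcases eq_or_ne (x ^ 2) 1 with hx1 | hx1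
  · rcases sq_eq_one_iff.mp hx1 with rfl | rfl <;> simp
  rw [log_inv, inv_pow]
  have hx1' : x ^ 2 - 1 ≠ 0 := sub_ne_zero.2 hx1
  field_simp
  ring

theorem integrableOn_Ioi_one_log_div_sq_sub_one_and_integral :
    IntegrableOn (fun x : ℝ ↦ log x / (x ^ 2 - 1)) (Ioi 1) ∧
      ∫ x in Ioi (1 : ℝ), log x / (x ^ 2 - 1) = π ^ 2 / 8 := by
  have hterm (n : ℕ) : IntegrableOn (fun x : ℝ ↦ log x / x ^ (2 * n + 2)) (Ioi 1) ∧
      ∫ x in Ioi (1 : ℝ), log x / x ^ (2 * n + 2) = 1 / (2 * n + 1 : ℝ) ^ 2 := by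
    exact_mod_cast integrableOn_Ioi_one_log_div_pow_succ_and_integral (k := 2 * n + 1)
      (Nat.succ_ne_zero _)
  obtain ⟨hint, hsum⟩ := integrable_and_hasSum_integral_of_nonneg
    (μ := volume.restrict (Ioi 1)) (F := fun n x ↦ log x / x ^ (2 * n + 2))
    (fun n ↦ (hterm n).1)
    (fun n ↦ (ae_restrict_iff' measurableSet_Ioi).2 <| ae_of_all _ fun x hx ↦
      div_nonneg (log_nonneg hx.le) (pow_nonneg (zero_le_one.trans hx.le) _))
    (by simpa only [(hterm _).2] using hasSum_one_div_two_mul_add_one_sq.summable)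
    ((ae_restrict_iff' measurableSet_Ioi).2 <| ae_of_all _ fun x hx ↦
      hasSum_log_div_pow_two_mul_add_two hx)
  simp only [(hterm _).2] at hsum
  exact ⟨hint, hsum.unique hasSum_one_div_two_mul_add_one_sq⟩

theorem integrableOn_Ioo_zero_one_log_div_sq_sub_one_and_integral :
    IntegrableOn (fun x : ℝ ↦ log x / (x ^ 2 - 1)) (Ioo 0 1) ∧
      ∫ x in Ioo (0 : ℝ) 1, log x / (x ^ 2 - 1) = π ^ 2 / 8 := by
  have hint := integrableOn_Ioo_zero_inv_iff one_pos fun x : ℝ ↦ log x / (x ^ 2 - 1)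
  have hval := integral_Ioo_zero_inv_eq one_pos fun x : ℝ ↦ log x / (x ^ 2 - 1)
  simp only [inv_one, smul_eq_mul, inv_sq_mul_log_inv_div] at hint hval
  rw [hint, hval]
  exact integrableOn_Ioi_one_log_div_sq_sub_one_and_integral

/-- The improper integral `∫₀^∞ (log x)/(x² - 1) dx` converges and equals `π²/4`;
in particular it is bounded above by `π²/4 ≤ 5/2`. -/
theorem stmt_3 :
    IntegrableOn (fun x : ℝ => Real.log x / (x ^ 2 - 1)) (Ioi 0) ∧
    (∫ x in Ioi (0 : ℝ), Real.log x / (x ^ 2 - 1)) = π ^ 2 / 4 ∧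
    π ^ 2 / 4 ≤ 5 / 2 := by
  obtain ⟨hint₀, hval₀⟩ := integrableOn_Ioo_zero_one_log_div_sq_sub_one_and_integral
  obtain ⟨hint₁, hval₁⟩ := integrableOn_Ioi_one_log_div_sq_sub_one_and_integral
  rw [← integrableOn_Ioc_iff_integrableOn_Ioo] at hint₀
  rw [← integral_Ioc_eq_integral_Ioo] at hval₀
  rw [← Ioc_union_Ioi_eq_Ioi zero_le_one]
  refine ⟨hint₀.union hint₁, ?_, by nlinarith [pi_lt_d2, pi_pos]⟩
  rw [setIntegral_union Ioc_disjoint_Ioi_same measurableSet_Ioi hint₀ hint₁, hval₀, hval₁]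
  ring
end

section
/- For every positive integer i and every real x > 0 with x ≠ i, the function x ↦ i (log x − log i)/(x² − i²) is nonnegative, and ∫₀^∞ i (log x − log i)/(x² − i²) dx = ∫₀^∞ (log u)/(u² − 1) du = π²/4. In particular the integral is independent of i. -/
/-!
Scaling `x = i u` reduces the integral to `∫₀^∞ log u / (u² - 1) du`. On `(0, 1)` the integrand
is `∑ₙ u^(2n) (-log u)`, and `∫₀¹ u^s (-log u) du = Γ(2)/(s+1)²` after `u = e^(-t)`, so the
integral over `(0, 1)` is `∑ₙ 1/(2n+1)² = π²/8`; the substitution `u ↦ 1/u` shows that the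
integral over `(1, ∞)` is the same. Integrability never has to be proved by hand: a Bochner
integral that is nonzero is the integral of an integrable function.
-/

open Real MeasureTheory Set

theorem hasSum_one_div_odd_sq :
    HasSum (fun n : ℕ => 1 / (2 * n + 1 : ℝ) ^ 2) (π ^ 2 / 8) := by
  have hzeta := hasSum_zeta_two
  have heven : HasSum (fun n : ℕ => 1 / ((2 * n : ℕ) : ℝ) ^ 2) (π ^ 2 / 24) := by
    have h : (fun n : ℕ => 1 / ((2 * n : ℕ) : ℝ) ^ 2) =
        fun n : ℕ => 1 / 4 * (1 / (n : ℝ) ^ 2) := by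
      funext n; push_cast; ring
    rw [h, show π ^ 2 / 24 = 1 / 4 * (π ^ 2 / 6) by ring]
    exact hzeta.mul_left _
  have hinj : Function.Injective fun n : ℕ => 2 * n + 1 := fun a b h => by simp only at h; omega
  have hodd : Summable fun n : ℕ => 1 / ((2 * n + 1 : ℕ) : ℝ) ^ 2 :=
    hzeta.summable.comp_injective hinj
  have hsum := (HasSum.even_add_odd (f := fun n : ℕ => 1 / (n : ℝ) ^ 2) heven
    hodd.hasSum).unique hzeta
  convert hodd.hasSum using 1
  · ext n; push_cast; rfl
  · linarith

theorem setIntegral_Ioo_zero_one_eq_setIntegral_Ioi_exp_neg (g : ℝ → ℝ) :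
    ∫ u in Ioo (0 : ℝ) 1, g u = ∫ t in Ioi (0 : ℝ), rexp (-t) * g (rexp (-t)) := by
  have himage : (fun t : ℝ => rexp (-t)) '' Ioi 0 = Ioo 0 1 := by
    ext u
    refine ⟨?_, fun ⟨hu0, hu1⟩ => ⟨-log u, ?_, by simp [exp_log hu0]⟩⟩
    · rintro ⟨t, ht, rfl⟩
      exact ⟨exp_pos _, exp_lt_one_iff.mpr (neg_lt_zero.mpr ht)⟩
    · simpa using log_neg hu0 hu1
  have hderiv : ∀ t ∈ Ioi (0 : ℝ),
      HasDerivWithinAt (fun t : ℝ => rexp (-t)) (-rexp (-t)) (Ioi 0) t := fun t _ => by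
    simpa using ((hasDerivAt_neg t).exp).hasDerivWithinAt
  rw [← himage, integral_image_eq_integral_abs_deriv_smul measurableSet_Ioi hderiv
    (exp_injective.comp neg_injective).injOn]
  simp only [abs_neg, abs_of_pos (exp_pos _), smul_eq_mul]

theorem integral_rpow_mul_neg_log {s : ℝ} (hs : -1 < s) :
    ∫ u in Ioo (0 : ℝ) 1, u ^ s * -log u = 1 / (s + 1) ^ 2 := by
  have hs1 : 0 < s + 1 := by linarith
  rw [setIntegral_Ioo_zero_one_eq_setIntegral_Ioi_exp_neg]
  calc ∫ t in Ioi (0 : ℝ), rexp (-t) * (rexp (-t) ^ s * -log (rexp (-t)))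
      = ∫ t in Ioi (0 : ℝ), t ^ (1 : ℝ) * rexp (-(s + 1) * t ^ (1 : ℝ)) := by
        refine setIntegral_congr_fun measurableSet_Ioi fun t _ => ?_
        rw [log_exp, ← exp_mul, rpow_one, show -(s + 1) * t = -t + -t * s by ring, exp_add]
        ring
    _ = 1 / (s + 1) ^ 2 := by
        rw [integral_rpow_mul_exp_neg_mul_rpow one_pos (by norm_num) hs1]
        norm_num [Gamma_two, rpow_neg hs1.le]

theorem hasSum_pow_mul_neg_log {u : ℝ} (hu : u ∈ Ioo (0 : ℝ) 1) :
    HasSum (fun n : ℕ => u ^ (2 * n) * -log u) (log u / (u ^ 2 - 1)) := by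
  obtain ⟨hu0, hu1⟩ := hu
  have hsq : u ^ 2 < 1 := by nlinarith
  have h := (hasSum_geometric_of_lt_one (by positivity) hsq).mul_right (-log u)
  rw [← neg_sub 1 (u ^ 2), div_neg, ← neg_div]
  simpa only [pow_mul, inv_mul_eq_div] using h

theorem integral_log_div_sq_sub_one_Ioo :
    ∫ u in Ioo (0 : ℝ) 1, log u / (u ^ 2 - 1) = π ^ 2 / 8 := by
  have hterm (n : ℕ) :
      ∫ u in Ioo (0 : ℝ) 1, u ^ (2 * n) * -log u = 1 / (2 * n + 1 : ℝ) ^ 2 := by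
    simpa only [← rpow_natCast, Nat.cast_mul, Nat.cast_ofNat] using
      integral_rpow_mul_neg_log (s := 2 * n) (by linarith [n.cast_nonneg (α := ℝ)])
  have hint (n : ℕ) : IntegrableOn (fun u => u ^ (2 * n) * -log u) (Ioo (0 : ℝ) 1) := by
    apply Integrable.of_integral_ne_zero
    rw [hterm]
    positivity
  have hnorm (n : ℕ) :
      ∫ u in Ioo (0 : ℝ) 1, ‖u ^ (2 * n) * -log u‖ = 1 / (2 * n + 1 : ℝ) ^ 2 := by
    rw [← hterm]
    refine setIntegral_congr_fun measurableSet_Ioo fun u ⟨hu0, hu1⟩ => ?_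
    have : 0 ≤ -log u := neg_nonneg.mpr (log_nonpos hu0.le hu1.le)
    exact norm_of_nonneg (by positivity)
  have hsummable : Summable fun n : ℕ => ∫ u in Ioo (0 : ℝ) 1, ‖u ^ (2 * n) * -log u‖ := by
    simpa only [hnorm] using hasSum_one_div_odd_sq.summable
  rw [setIntegral_congr_fun measurableSet_Ioo fun u hu => (hasSum_pow_mul_neg_log hu).tsum_eq.symm,
    ← integral_tsum_of_summable_integral_norm hint hsummable]
  simpa only [hterm] using hasSum_one_div_odd_sq.tsum_eq

theorem setIntegral_Ioi_one_eq_setIntegral_Ioo_inv (g : ℝ → ℝ) :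
    ∫ u in Ioi (1 : ℝ), g u = ∫ x in Ioo (0 : ℝ) 1, (x ^ 2)⁻¹ * g x⁻¹ := by
  have himage : (fun x : ℝ => x⁻¹) '' Ioo 0 1 = Ioi 1 := by
    ext u
    refine ⟨?_, fun hu => ⟨u⁻¹, ⟨inv_pos.mpr (zero_lt_one.trans hu), inv_lt_one_of_one_lt₀ hu⟩,
      inv_inv u⟩⟩
    rintro ⟨x, hx, rfl⟩
    exact one_lt_inv_iff₀.mpr hx
  have hderiv : ∀ x ∈ Ioo (0 : ℝ) 1,
      HasDerivWithinAt (fun x : ℝ => x⁻¹) (-(x ^ 2)⁻¹) (Ioo 0 1) x := fun x hx =>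
    (hasDerivAt_inv hx.1.ne').hasDerivWithinAt
  rw [← himage, integral_image_eq_integral_abs_deriv_smul measurableSet_Ioo hderiv
    inv_injective.injOn]
  simp only [abs_neg, abs_inv, abs_sq, smul_eq_mul]

theorem integral_log_div_sq_sub_one_Ioi_one :
    ∫ u in Ioi (1 : ℝ), log u / (u ^ 2 - 1) = π ^ 2 / 8 := by
  rw [setIntegral_Ioi_one_eq_setIntegral_Ioo_inv, ← integral_log_div_sq_sub_one_Ioo]
  refine setIntegral_congr_fun measurableSet_Ioo fun x ⟨hx0, hx1⟩ => ?_
  have : x ^ 2 - 1 ≠ 0 := by nlinarith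
  have : 1 - x ^ 2 ≠ 0 := by nlinarith
  rw [log_inv, inv_pow]
  field_simp
  ring

theorem integral_log_div_sq_sub_one :
    ∫ u in Ioi (0 : ℝ), log u / (u ^ 2 - 1) = π ^ 2 / 4 := by
  have hIoo : IntegrableOn (fun u => log u / (u ^ 2 - 1)) (Ioo (0 : ℝ) 1) := by
    apply Integrable.of_integral_ne_zero
    rw [integral_log_div_sq_sub_one_Ioo]
    positivity
  have hIoi : IntegrableOn (fun u => log u / (u ^ 2 - 1)) (Ioi (1 : ℝ)) := by
    apply Integrable.of_integral_ne_zero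
    rw [integral_log_div_sq_sub_one_Ioi_one]
    positivity
  rw [← Ioc_union_Ioi_eq_Ioi zero_le_one, setIntegral_union (Ioc_disjoint_Ioi le_rfl)
    measurableSet_Ioi (hIoo.congr_set_ae Ioo_ae_eq_Ioc.symm) hIoi, integral_Ioc_eq_integral_Ioo,
    integral_log_div_sq_sub_one_Ioo, integral_log_div_sq_sub_one_Ioi_one]
  ring

theorem integral_mul_log_sub_log_div_sq_sub_sq {c : ℝ} (hc : 0 < c) :
    ∫ x in Ioi (0 : ℝ), c * (log x - log c) / (x ^ 2 - c ^ 2) =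
      ∫ u in Ioi (0 : ℝ), log u / (u ^ 2 - 1) := by
  set f : ℝ → ℝ := fun x => c * (log x - log c) / (x ^ 2 - c ^ 2)
  have hscale := integral_comp_mul_left_Ioi f 0 hc
  rw [mul_zero, smul_eq_mul, eq_inv_mul_iff_mul_eq₀ hc.ne', ← integral_const_mul] at hscale
  rw [← hscale]
  refine setIntegral_congr_fun measurableSet_Ioi fun x hx => ?_
  simp only [f]
  rw [log_mul hc.ne' (ne_of_gt hx), add_sub_cancel_left, mul_div_assoc', ← mul_assoc, ← sq,
    mul_pow, ← mul_sub_one, mul_div_mul_left _ _ (pow_ne_zero 2 hc.ne')]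

theorem log_sub_log_div_sq_sub_sq_nonneg {x c : ℝ} (hx : 0 < x) (hc : 0 < c) :
    0 ≤ (log x - log c) / (x ^ 2 - c ^ 2) := by
  rcases lt_trichotomy x c with h | rfl | h
  · exact div_nonneg_of_nonpos (sub_nonpos.mpr (log_le_log hx h.le))
      (sub_nonpos.mpr (pow_le_pow_left₀ hx.le h.le 2))
  · simp
  · exact div_nonneg (sub_nonneg.mpr (log_le_log hc h.le))
      (sub_nonneg.mpr (pow_le_pow_left₀ hc.le h.le 2))

/-- For every positive integer `i`, the function `x ↦ i(log x - log i)/(x² - i²)` is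
nonnegative on `(0,∞) \ {i}`, and `∫₀^∞ i(log x - log i)/(x² - i²) dx
= ∫₀^∞ (log u)/(u² - 1) du = π²/4`; in particular the integral is independent of `i`. -/
theorem stmt_4 (i : ℕ) (hi : 0 < i) :
    (∀ x : ℝ, 0 < x → x ≠ (i : ℝ) →
      0 ≤ (i : ℝ) * (Real.log x - Real.log i) / (x ^ 2 - (i : ℝ) ^ 2)) ∧
    (∫ x in Ioi (0 : ℝ), (i : ℝ) * (Real.log x - Real.log i) / (x ^ 2 - (i : ℝ) ^ 2)) =
      (∫ u in Ioi (0 : ℝ), Real.log u / (u ^ 2 - 1)) ∧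
    (∫ u in Ioi (0 : ℝ), Real.log u / (u ^ 2 - 1)) = π ^ 2 / 4 := by
  have hi' : (0 : ℝ) < i := Nat.cast_pos.mpr hi
  refine ⟨fun x hx _ => ?_, integral_mul_log_sub_log_div_sq_sub_sq hi',
    integral_log_div_sq_sub_one⟩
  rw [mul_div_assoc]
  exact mul_nonneg hi'.le (log_sub_log_div_sq_sub_sq_nonneg hx hi')
end

section
/- Let P be the infinite symmetric matrix with entries P_{ij} = √(ij)(log i − log j)/(i² − j²) for positive integers i ≠ j, and P_{ii} = 1/(2i). Then P defines a bounded linear operator on ℓ², with operator norm at most ∫₀^∞ (log x)/(x²−1) dx = π²/4. -/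
open Real MeasureTheory Set Finset

noncomputable def Pent (i j : ℕ+) : ℝ :=
  if i = j then 1 / (2 * (i : ℝ))
  else Real.sqrt ((i : ℝ) * j) * (Real.log i - Real.log j) / ((i : ℝ) ^ 2 - (j : ℝ) ^ 2)

noncomputable def gk (x : ℝ) : ℝ := if x = 1 then 1/2 else Real.log x / (x ^ 2 - 1)

lemma key0 {t : ℝ} (ht : 0 < t) : Real.log t ≤ (t ^ 2 - 1) / 2 := by
  have h := Real.log_le_sub_one_of_pos ht
  nlinarith [sq_nonneg (t - 1)]

lemma gk_one : gk 1 = 1/2 := by simp [gk]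

lemma gk_nonneg {x : ℝ} (hx : 0 < x) : 0 ≤ gk x := by
  rcases lt_trichotomy x 1 with h | h | h
  · rw [gk, if_neg h.ne]
    have h1 : Real.log x ≤ 0 := Real.log_nonpos hx.le h.le
    have h2 : x ^ 2 - 1 < 0 := by nlinarith
    exact div_nonneg_of_nonpos h1 h2.le
  · simp [gk, h]
  · rw [gk, if_neg h.ne']
    exact div_nonneg (Real.log_nonneg h.le) (by nlinarith)

lemma gk_le_half {x : ℝ} (hx : 1 ≤ x) : gk x ≤ 1/2 := by
  rcases eq_or_lt_of_le hx with h | h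
  · simp [gk, ← h]
  · rw [gk, if_neg h.ne']
    rw [div_le_iff₀ (by nlinarith)]
    have := key0 (lt_trans zero_lt_one h)
    linarith

lemma half_le_gk {x : ℝ} (h0 : 0 < x) (hx : x ≤ 1) : 1/2 ≤ gk x := by
  rcases eq_or_lt_of_le hx with h | h
  · simp [gk, h]
  · rw [gk, if_neg h.ne]
    rw [le_div_iff_of_neg (by nlinarith)]
    have := key0 h0
    linarith

lemma gk_hasDerivAt {x : ℝ} (hx : 0 < x) (hne : x ≠ 1) :
    HasDerivAt gk ((x⁻¹ * (x ^ 2 - 1) - Real.log x * (2 * x ^ 1)) / (x ^ 2 - 1) ^ 2) x := by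
  have hden : x ^ 2 - 1 ≠ 0 := by
    rcases lt_or_gt_of_ne hne with h | h
    · nlinarith
    · nlinarith
  have h1 : HasDerivAt (fun y : ℝ => Real.log y / (y ^ 2 - 1))
      ((x⁻¹ * (x ^ 2 - 1) - Real.log x * (2 * x ^ 1)) / (x ^ 2 - 1) ^ 2) x := by
    have := (Real.hasDerivAt_log hx.ne').div ((hasDerivAt_pow 2 x).sub_const 1) hden
    exact this.congr_deriv (by norm_num)
  apply h1.congr_of_eventuallyEq
  have hopen : ∀ᶠ y in nhds x, y ≠ 1 := eventually_ne_nhds hne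
  exact hopen.mono fun y hy => by rw [gk, if_neg hy]

lemma gk_deriv_nonpos {x : ℝ} (hx : 0 < x) (hne : x ≠ 1) :
    (x⁻¹ * (x ^ 2 - 1) - Real.log x * (2 * x ^ 1)) / (x ^ 2 - 1) ^ 2 ≤ 0 := by
  have hden : (0:ℝ) < (x ^ 2 - 1) ^ 2 := by
    have : x ^ 2 - 1 ≠ 0 := by
      rcases lt_or_gt_of_ne hne with h | h
      · nlinarith
      · nlinarith
    positivity
  apply div_nonpos_of_nonpos_of_nonneg _ hden.le
  have hinv : x * x⁻¹ = 1 := mul_inv_cancel₀ hx.ne'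
  have hlog : Real.log (x⁻¹ ^ 2) ≤ x⁻¹ ^ 2 - 1 := Real.log_le_sub_one_of_pos (by positivity)
  rw [Real.log_pow, Real.log_inv] at hlog
  push_cast at hlog
  -- hlog : 2 * (- log x) ≤ x⁻¹^2 - 1
  have h2 : x * (2 * (- Real.log x)) ≤ x * (x⁻¹ ^ 2 - 1) :=
    mul_le_mul_of_nonneg_left hlog hx.le
  nlinarith [h2, hinv, sq_nonneg x⁻¹]

lemma gk_antitoneOn_Ioo : AntitoneOn gk (Ioo (0:ℝ) 1) := by
  have hd : ∀ x ∈ Ioo (0:ℝ) 1, HasDerivAt gk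
      ((x⁻¹ * (x ^ 2 - 1) - Real.log x * (2 * x ^ 1)) / (x ^ 2 - 1) ^ 2) x :=
    fun x hx => gk_hasDerivAt hx.1 hx.2.ne
  apply antitoneOn_of_deriv_nonpos (convex_Ioo 0 1)
  · exact fun x hx => (hd x hx).continuousAt.continuousWithinAt
  · rw [interior_Ioo]
    exact fun x hx => (hd x hx).differentiableAt.differentiableWithinAt
  · rw [interior_Ioo]
    intro x hx
    rw [(hd x hx).deriv]
    exact gk_deriv_nonpos hx.1 hx.2.ne

lemma gk_antitoneOn_Ioi : AntitoneOn gk (Ioi (1:ℝ)) := by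
  have hd : ∀ x ∈ Ioi (1:ℝ), HasDerivAt gk
      ((x⁻¹ * (x ^ 2 - 1) - Real.log x * (2 * x ^ 1)) / (x ^ 2 - 1) ^ 2) x :=
    fun x hx => gk_hasDerivAt (lt_trans zero_lt_one hx) (ne_of_gt hx)
  apply antitoneOn_of_deriv_nonpos (convex_Ioi 1)
  · exact fun x hx => (hd x hx).continuousAt.continuousWithinAt
  · rw [interior_Ioi]
    exact fun x hx => (hd x hx).differentiableAt.differentiableWithinAt
  · rw [interior_Ioi]
    intro x hx
    rw [(hd x hx).deriv]
    exact gk_deriv_nonpos (lt_trans zero_lt_one hx) (ne_of_gt hx)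

lemma gk_anti {x y : ℝ} (hx : 0 < x) (hxy : x ≤ y) : gk y ≤ gk x := by
  rcases le_or_gt y 1 with hy1 | hy1
  · rcases eq_or_lt_of_le hy1 with h | h
    · calc gk y = 1/2 := by rw [h, gk_one]
        _ ≤ gk x := half_le_gk hx (hxy.trans hy1)
    · exact gk_antitoneOn_Ioo ⟨hx, lt_of_le_of_lt hxy h⟩ ⟨hx.trans_le hxy, h⟩ hxy
  · rcases le_or_gt x 1 with hx1 | hx1
    · calc gk y ≤ 1/2 := gk_le_half hy1.le
        _ ≤ gk x := half_le_gk hx hx1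
    · exact gk_antitoneOn_Ioi hx1 (hx1.trans_le hxy) hxy

lemma neg_log_le {x : ℝ} (hx : 0 < x) : -Real.log x ≤ 2 / Real.sqrt x := by
  have hs : 0 < Real.sqrt x := Real.sqrt_pos.2 hx
  have h1 : Real.log (Real.sqrt x)⁻¹ ≤ (Real.sqrt x)⁻¹ - 1 :=
    Real.log_le_sub_one_of_pos (by positivity)
  rw [Real.log_inv, Real.log_sqrt hx.le] at h1
  rw [div_eq_mul_inv]
  linarith

lemma gk_le_sqrt {x : ℝ} (hx : 0 < x) (hx1 : x ≤ 1) : gk x ≤ 2 / Real.sqrt x := by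
  rcases eq_or_lt_of_le hx1 with h | h
  · rw [h]
    simp [gk_one]
    norm_num
  · rw [gk, if_neg h.ne]
    set s := Real.sqrt x with hs
    have hs0 : 0 < s := Real.sqrt_pos.2 hx
    have hs1 : s < 1 := by
      rw [hs, show (1:ℝ) = Real.sqrt 1 by simp]
      exact Real.sqrt_lt_sqrt hx.le h
    have hxs : x = s ^ 2 := (Real.sq_sqrt hx.le).symm
    have hlog : Real.log x = 2 * Real.log s := by
      rw [hxs, Real.log_pow]; push_cast; ring
    have hls : 1 - s⁻¹ ≤ Real.log s := by
      have := Real.log_le_sub_one_of_pos (show (0:ℝ) < s⁻¹ by positivity)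
      rw [Real.log_inv] at this
      linarith
    have hden : x ^ 2 - 1 < 0 := by nlinarith
    rw [div_le_iff_of_neg hden, hlog, hxs]
    have hinv : s * s⁻¹ = 1 := mul_inv_cancel₀ hs0.ne'
    have hmul : s * (1 - s⁻¹) ≤ s * Real.log s := mul_le_mul_of_nonneg_left hls hs0.le
    -- goal : 2 / s * ((s^2)^2 - 1) ≤ 2 * log s
    rw [div_mul_eq_mul_div, div_le_iff₀ hs0]
    nlinarith [sq_nonneg s, sq_nonneg (s-1), sq_nonneg (s+1), mul_pos hs0 hs0]

lemma gk_measurable : Measurable gk := by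
  apply Measurable.ite (measurableSet_eq)
  · exact measurable_const
  · exact Real.measurable_log.div ((measurable_id.pow_const 2).sub_const 1)

lemma integrable_gk : IntegrableOn gk (Ioi (0:ℝ)) := by
  have h1 : IntegrableOn gk (Ioc (0:ℝ) 1) := by
    have hmaj : IntegrableOn (fun x : ℝ => 2 * x ^ (-(1:ℝ)/2)) (Ioc (0:ℝ) 1) := by
      have := (intervalIntegral.intervalIntegrable_rpow' (a := 0) (b := 1)
        (r := -(1:ℝ)/2) (by norm_num)).const_mul 2
      rwa [intervalIntegrable_iff_integrableOn_Ioc_of_le zero_le_one] at this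
    apply Integrable.mono' hmaj (gk_measurable.aestronglyMeasurable.restrict)
    filter_upwards [ae_restrict_mem measurableSet_Ioc] with x hx
    rw [Real.norm_eq_abs, abs_of_nonneg (gk_nonneg hx.1)]
    calc gk x ≤ 2 / Real.sqrt x := gk_le_sqrt hx.1 hx.2
      _ = 2 * x ^ (-(1:ℝ)/2) := by
          rw [Real.sqrt_eq_rpow, div_eq_mul_inv, ← Real.rpow_neg (le_of_lt hx.1)]
          norm_num
  have h2 : IntegrableOn gk (Ioc (1:ℝ) 2) := by
    apply Integrable.mono' (integrable_const (1/2 : ℝ)) (gk_measurable.aestronglyMeasurable.restrict)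
    filter_upwards [ae_restrict_mem measurableSet_Ioc] with x hx
    rw [Real.norm_eq_abs, abs_of_nonneg (gk_nonneg (lt_trans zero_lt_one hx.1))]
    calc gk x ≤ gk 1 := gk_anti zero_lt_one hx.1.le
      _ = 1/2 := gk_one
  have h3 : IntegrableOn gk (Ioi (2:ℝ)) := by
    have hmaj : IntegrableOn (fun x : ℝ => 4 * x ^ (-(3:ℝ)/2)) (Ioi (2:ℝ)) := by
      have := (integrableOn_Ioi_rpow_of_lt (a := -(3:ℝ)/2) (by norm_num) (c := 2) (by norm_num))
      exact this.const_mul 4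
    apply Integrable.mono' hmaj (gk_measurable.aestronglyMeasurable.restrict)
    filter_upwards [ae_restrict_mem measurableSet_Ioi] with x hx
    have hx0 : (0:ℝ) < x := by linarith [mem_Ioi.1 hx]
    rw [Real.norm_eq_abs, abs_of_nonneg (gk_nonneg hx0)]
    have hx1 : (1:ℝ) < x := by linarith [mem_Ioi.1 hx]
    rw [gk, if_neg hx1.ne']
    set s := Real.sqrt x with hs
    have hs0 : 0 < s := Real.sqrt_pos.2 hx0
    have hxs : x = s ^ 2 := (Real.sq_sqrt hx0.le).symm
    have hs2 : Real.sqrt 2 ≤ s := by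
      rw [hs]; exact Real.sqrt_le_sqrt (le_of_lt (mem_Ioi.1 hx))
    have hs1 : 1 < s := by
      have : (1:ℝ) < Real.sqrt 2 := by
        rw [show (1:ℝ) = Real.sqrt 1 by simp]
        exact Real.sqrt_lt_sqrt zero_le_one one_lt_two
      linarith
    have hrw : x ^ (-(3:ℝ)/2) = s⁻¹ ^ 3 := by
      rw [hxs, ← Real.rpow_natCast s 2, ← Real.rpow_mul hs0.le, ← Real.rpow_natCast s⁻¹ 3,
        ← Real.rpow_neg_one s, ← Real.rpow_mul hs0.le]
      norm_num
    rw [hrw, hxs]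
    have hlog : Real.log (s^2) = 2 * Real.log s := by rw [Real.log_pow]; push_cast; ring
    have hls : Real.log s ≤ s - 1 := Real.log_le_sub_one_of_pos hs0
    have hden : (0:ℝ) < (s^2)^2 - 1 := by nlinarith
    rw [div_le_iff₀ hden, hlog]
    have key : 4 * s⁻¹^3 * ((s^2)^2 - 1) = 4*s - 4*s⁻¹^3 := by
      field_simp
    have hle1 : s⁻¹ ≤ 1 := by
      rw [inv_le_one_iff₀]; right; exact hs1.le
    have hle3 : s⁻¹^3 ≤ 1 := pow_le_one₀ (by positivity) hle1
    rw [key]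
    linarith
  have hu1 : Set.Ioc (0:ℝ) 1 ∪ Set.Ioc 1 2 = Set.Ioc 0 2 := Set.Ioc_union_Ioc_eq_Ioc zero_le_one one_le_two
  have hu2 : Set.Ioc (0:ℝ) 2 ∪ Set.Ioi 2 = Set.Ioi 0 := Set.Ioc_union_Ioi_eq_Ioi (by norm_num)
  rw [← hu2, ← hu1]
  exact ((h1.union h2).union h3)

lemma gk_zero : gk 0 = 0 := by
  norm_num [gk]

lemma h0_nonneg (c : ℝ) (hc : 0 < c) (m : ℕ) : 0 ≤ (1/c) * gk (m / c) := by
  rcases Nat.eq_zero_or_pos m with h | h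
  · simp [h, gk_zero]
  · have : (0:ℝ) < m / c := by
      have : (0:ℝ) < m := by exact_mod_cast h
      positivity
    have := gk_nonneg this
    positivity

lemma riemann_bound (c : ℝ) (hc : 0 < c) (N : ℕ) :
    ∑ k ∈ Finset.range N, (1/c) * gk ((1+k : ℕ) / c) ≤ ∫ x in Set.Ioi (0:ℝ), gk x := by
  set a : ℕ → ℝ := fun k => (k : ℝ) / c with ha
  have hmono : ∀ k : ℕ, a k ≤ a (k+1) := by
    intro k
    rw [ha, div_le_div_iff_of_pos_right hc]
    push_cast
    linarith
  have hanonneg : ∀ k : ℕ, 0 ≤ a k := fun k => by positivity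
  have hint : ∀ k : ℕ, IntegrableOn gk (Set.Ioc (a k) (a (k+1))) := by
    intro k
    apply integrable_gk.mono_set
    intro x hx
    exact lt_of_le_of_lt (hanonneg k) hx.1
  have step : ∀ k : ℕ, (1/c) * gk ((1+k : ℕ) / c) ≤ ∫ x in (a k)..(a (k+1)), gk x := by
    intro k
    rw [intervalIntegral.integral_of_le (hmono k)]
    have hconst : ∫ _ in Set.Ioc (a k) (a (k+1)), gk (a (k+1)) = (1/c) * gk ((1+k : ℕ) / c) := by
      rw [setIntegral_const, Measure.real, Real.volume_Ioc, smul_eq_mul]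
      congr 1
      · rw [ENNReal.toReal_ofReal (by linarith [hmono k])]
        rw [ha]
        push_cast
        field_simp
        ring
      · rw [ha]; push_cast; ring_nf
    rw [← hconst]
    apply setIntegral_mono_on _ (hint k) measurableSet_Ioc
    · intro x hx
      have hx0 : 0 < x := lt_of_le_of_lt (hanonneg k) hx.1
      exact gk_anti hx0 hx.2
    · exact integrableOn_const (by rw [Real.volume_Ioc]; exact ENNReal.ofReal_ne_top)
  calc ∑ k ∈ Finset.range N, (1/c) * gk ((1+k : ℕ) / c)
      ≤ ∑ k ∈ Finset.range N, ∫ x in (a k)..(a (k+1)), gk x :=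
        Finset.sum_le_sum fun k _ => step k
    _ = ∫ x in (a 0)..(a N), gk x := by
        apply intervalIntegral.sum_integral_adjacent_intervals
        intro k _
        exact (intervalIntegrable_iff_integrableOn_Ioc_of_le (hmono k)).2 (hint k)
    _ = ∫ x in Set.Ioc (0:ℝ) (a N), gk x := by
        rw [intervalIntegral.integral_of_le (le_trans (by simp [ha]) (hanonneg N))]
        congr 1
        simp [ha]
    _ ≤ ∫ x in Set.Ioi (0:ℝ), gk x := by
        apply setIntegral_mono_set integrable_gk
        · filter_upwards [ae_restrict_mem measurableSet_Ioi] with x hx using gk_nonneg hx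
        · exact HasSubset.Subset.eventuallyLE Set.Ioc_subset_Ioi_self

lemma row_bound (i : ℕ+) (T : Finset ℕ+) :
    ∑ j ∈ T, (1/(i:ℝ)) * gk ((j:ℝ)/(i:ℝ)) ≤ ∫ x in Set.Ioi (0:ℝ), gk x := by
  have hi : (0:ℝ) < (i:ℝ) := by exact_mod_cast i.pos
  set N : ℕ := T.sup (fun j => (j : ℕ)) with hN
  have h1 : ∑ j ∈ T, (1/(i:ℝ)) * gk ((j:ℝ)/(i:ℝ))
      = ∑ m ∈ T.image (fun j : ℕ+ => (j : ℕ)), (1/(i:ℝ)) * gk ((m:ℝ)/(i:ℝ)) := by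
    rw [Finset.sum_image]
    intro a _ b _ h
    exact PNat.coe_injective h
  have h2 : T.image (fun j : ℕ+ => (j : ℕ)) ⊆ Finset.Ico 1 (N+1) := by
    intro m hm
    rw [Finset.mem_image] at hm
    obtain ⟨j, hj, rfl⟩ := hm
    rw [Finset.mem_Ico]
    exact ⟨j.one_le, Nat.lt_succ_of_le (Finset.le_sup hj)⟩
  calc ∑ j ∈ T, (1/(i:ℝ)) * gk ((j:ℝ)/(i:ℝ))
      ≤ ∑ m ∈ Finset.Ico 1 (N+1), (1/(i:ℝ)) * gk ((m:ℝ)/(i:ℝ)) := by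
        rw [h1]
        exact Finset.sum_le_sum_of_subset_of_nonneg h2 fun m _ _ => h0_nonneg _ hi m
    _ = ∑ k ∈ Finset.range N, (1/(i:ℝ)) * gk (((1+k:ℕ):ℝ)/(i:ℝ)) := by
        rw [Finset.sum_Ico_eq_sum_range]
        simp
    _ ≤ ∫ x in Set.Ioi (0:ℝ), gk x := riemann_bound (i:ℝ) hi N

noncomputable def rker (i j : ℕ+) : ℝ := (1/(i:ℝ)) * gk ((j:ℝ)/(i:ℝ))

lemma rker_nonneg (i j : ℕ+) : 0 ≤ rker i j := h0_nonneg _ (by exact_mod_cast i.pos) (j : ℕ)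

lemma Pent_eq (i j : ℕ+) : Pent i j = Real.sqrt (rker i j) * Real.sqrt (rker j i) := by
  have hi : (0:ℝ) < (i:ℝ) := by exact_mod_cast i.pos
  have hj : (0:ℝ) < (j:ℝ) := by exact_mod_cast j.pos
  by_cases h : i = j
  · subst h
    rw [Pent, if_pos rfl, rker, div_self hi.ne', gk_one, Real.mul_self_sqrt
      (by positivity : (0:ℝ) ≤ 1/(i:ℝ) * (1/2))]
    ring
  · have hij : (i:ℝ) ≠ (j:ℝ) := fun hc => h (PNat.coe_injective (Nat.cast_injective hc))
    have hD : (i:ℝ)^2 - (j:ℝ)^2 ≠ 0 := by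
      intro hc
      apply hij
      nlinarith
    have hdivne : (j:ℝ)/(i:ℝ) ≠ 1 := by
      intro hc
      rw [div_eq_one_iff_eq hi.ne'] at hc
      exact hij hc.symm
    have hdivne' : (i:ℝ)/(j:ℝ) ≠ 1 := by
      intro hc
      rw [div_eq_one_iff_eq hj.ne'] at hc
      exact hij hc
    have hD' : (j:ℝ)^2 - (i:ℝ)^2 ≠ 0 := fun hc => hD (by linarith)
    have hr1 : rker i j = (i:ℝ) * (Real.log i - Real.log j) / ((i:ℝ)^2 - (j:ℝ)^2) := by
      rw [rker, gk, if_neg hdivne, Real.log_div hj.ne' hi.ne']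
      have hE : ((j:ℝ)/(i:ℝ))^2 - 1 = ((j:ℝ)^2-(i:ℝ)^2)/(i:ℝ)^2 := by field_simp
      rw [hE, div_div_eq_mul_div]
      field_simp
      ring
    have hr2 : rker j i = (j:ℝ) * (Real.log i - Real.log j) / ((i:ℝ)^2 - (j:ℝ)^2) := by
      rw [rker, gk, if_neg hdivne', Real.log_div hi.ne' hj.ne']
      have hE : ((i:ℝ)/(j:ℝ))^2 - 1 = ((i:ℝ)^2-(j:ℝ)^2)/(j:ℝ)^2 := by field_simp
      rw [hE, div_div_eq_mul_div]
      field_simp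
    have hLD : 0 ≤ (Real.log i - Real.log j) / ((i:ℝ)^2 - (j:ℝ)^2) := by
      rcases lt_or_gt_of_ne hij with hlt | hlt
      · apply div_nonneg_of_nonpos
        · simp only [sub_nonpos]
          linarith [Real.log_le_log hi hlt.le]
        · nlinarith
      · apply div_nonneg
        · simp only [sub_nonneg]
          exact Real.log_le_log hj hlt.le
        · nlinarith
    have hprod : (i:ℝ) * (Real.log i - Real.log j) / ((i:ℝ)^2 - (j:ℝ)^2) *
        ((j:ℝ) * (Real.log i - Real.log j) / ((i:ℝ)^2 - (j:ℝ)^2))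
        = ((i:ℝ)*(j:ℝ)) * ((Real.log i - Real.log j) / ((i:ℝ)^2 - (j:ℝ)^2))^2 := by
      field_simp
    have hrhs : Real.sqrt (rker i j) * Real.sqrt (rker j i)
        = Real.sqrt ((i:ℝ)*(j:ℝ)) * ((Real.log i - Real.log j) / ((i:ℝ)^2-(j:ℝ)^2)) := by
      rw [← Real.sqrt_mul (rker_nonneg i j), hr1, hr2, hprod,
        Real.sqrt_mul (by positivity : (0:ℝ) ≤ (i:ℝ)*(j:ℝ)), Real.sqrt_sq hLD]
    rw [Pent, if_neg h, hrhs, mul_div_assoc]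

lemma Pent_nonneg (i j : ℕ+) : 0 ≤ Pent i j := by
  rw [Pent_eq]
  positivity

lemma row_bound' (hI : ∫ x in Set.Ioi (0:ℝ), gk x = π^2/4) (i : ℕ+) (T : Finset ℕ+) :
    ∑ j ∈ T, rker i j ≤ π^2/4 := by
  rw [← hI]
  exact row_bound i T

lemma bound_part (hI : ∫ x in Set.Ioi (0:ℝ), gk x = π^2/4) (f g : ℕ+ →₀ ℂ) :
    ‖∑ i ∈ f.support, ∑ j ∈ g.support, g j * (Pent i j : ℂ) * f i‖ ≤
      (π ^ 2 / 4) * Real.sqrt (∑ i ∈ f.support, ‖f i‖ ^ 2) *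
        Real.sqrt (∑ j ∈ g.support, ‖g j‖ ^ 2) := by
  set S := f.support
  set T := g.support
  have hterm : ∀ i j : ℕ+, ‖g j * (Pent i j : ℂ) * f i‖
      = Real.sqrt (rker i j * ‖f i‖^2) * Real.sqrt (rker j i * ‖g j‖^2) := by
    intro i j
    rw [norm_mul, norm_mul, Complex.norm_real, Real.norm_eq_abs,
      abs_of_nonneg (Pent_nonneg i j), Pent_eq,
      Real.sqrt_mul (rker_nonneg i j), Real.sqrt_mul (rker_nonneg j i),
      Real.sqrt_sq (norm_nonneg _), Real.sqrt_sq (norm_nonneg _)]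
    ring
  have h1 : ‖∑ i ∈ S, ∑ j ∈ T, g j * (Pent i j : ℂ) * f i‖
      ≤ ∑ p ∈ S ×ˢ T, Real.sqrt (rker p.1 p.2 * ‖f p.1‖^2) *
        Real.sqrt (rker p.2 p.1 * ‖g p.2‖^2) := by
    rw [← Finset.sum_product']
    calc ‖∑ p ∈ S ×ˢ T, g p.2 * (Pent p.1 p.2 : ℂ) * f p.1‖
        ≤ ∑ p ∈ S ×ˢ T, ‖g p.2 * (Pent p.1 p.2 : ℂ) * f p.1‖ := norm_sum_le _ _
      _ = _ := Finset.sum_congr rfl fun p _ => hterm p.1 p.2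
  have h2 : ∑ p ∈ S ×ˢ T, rker p.1 p.2 * ‖f p.1‖^2 ≤ (π^2/4) * ∑ i ∈ S, ‖f i‖^2 := by
    rw [Finset.sum_product]
    calc ∑ i ∈ S, ∑ j ∈ T, rker i j * ‖f i‖^2
        = ∑ i ∈ S, (∑ j ∈ T, rker i j) * ‖f i‖^2 := by
          refine Finset.sum_congr rfl fun i _ => ?_
          rw [Finset.sum_mul]
      _ ≤ ∑ i ∈ S, (π^2/4) * ‖f i‖^2 := by
          apply Finset.sum_le_sum
          intro i _
          exact mul_le_mul_of_nonneg_right (row_bound' hI i T) (by positivity)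
      _ = (π^2/4) * ∑ i ∈ S, ‖f i‖^2 := by rw [Finset.mul_sum]
  have h3 : ∑ p ∈ S ×ˢ T, rker p.2 p.1 * ‖g p.2‖^2 ≤ (π^2/4) * ∑ j ∈ T, ‖g j‖^2 := by
    rw [Finset.sum_product]
    rw [Finset.sum_comm]
    calc ∑ j ∈ T, ∑ i ∈ S, rker j i * ‖g j‖^2
        = ∑ j ∈ T, (∑ i ∈ S, rker j i) * ‖g j‖^2 := by
          refine Finset.sum_congr rfl fun j _ => ?_
          rw [Finset.sum_mul]
      _ ≤ ∑ j ∈ T, (π^2/4) * ‖g j‖^2 := by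
          apply Finset.sum_le_sum
          intro j _
          exact mul_le_mul_of_nonneg_right (row_bound' hI j S) (by positivity)
      _ = (π^2/4) * ∑ j ∈ T, ‖g j‖^2 := by rw [Finset.mul_sum]
  have hcs := Real.sum_sqrt_mul_sqrt_le (S ×ˢ T)
    (f := fun p => rker p.1 p.2 * ‖f p.1‖^2) (g := fun p => rker p.2 p.1 * ‖g p.2‖^2)
    (fun p => mul_nonneg (rker_nonneg _ _) (by positivity))
    (fun p => mul_nonneg (rker_nonneg _ _) (by positivity))
  have hfin : Real.sqrt (∑ p ∈ S ×ˢ T, rker p.1 p.2 * ‖f p.1‖^2) *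
      Real.sqrt (∑ p ∈ S ×ˢ T, rker p.2 p.1 * ‖g p.2‖^2)
      ≤ (π ^ 2 / 4) * Real.sqrt (∑ i ∈ S, ‖f i‖ ^ 2) * Real.sqrt (∑ j ∈ T, ‖g j‖ ^ 2) := by
    have e1 : Real.sqrt ((π^2/4) * ∑ i ∈ S, ‖f i‖^2)
        = (π/2) * Real.sqrt (∑ i ∈ S, ‖f i‖^2) := by
      rw [Real.sqrt_mul (by positivity), show (π^2/4 : ℝ) = (π/2)^2 by ring,
        Real.sqrt_sq (by positivity)]
    have e2 : Real.sqrt ((π^2/4) * ∑ j ∈ T, ‖g j‖^2)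
        = (π/2) * Real.sqrt (∑ j ∈ T, ‖g j‖^2) := by
      rw [Real.sqrt_mul (by positivity), show (π^2/4 : ℝ) = (π/2)^2 by ring,
        Real.sqrt_sq (by positivity)]
    calc Real.sqrt (∑ p ∈ S ×ˢ T, rker p.1 p.2 * ‖f p.1‖^2) *
        Real.sqrt (∑ p ∈ S ×ˢ T, rker p.2 p.1 * ‖g p.2‖^2)
        ≤ Real.sqrt ((π^2/4) * ∑ i ∈ S, ‖f i‖^2) *
          Real.sqrt ((π^2/4) * ∑ j ∈ T, ‖g j‖^2) := by
          apply mul_le_mul (Real.sqrt_le_sqrt h2) (Real.sqrt_le_sqrt h3)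
            (Real.sqrt_nonneg _) (Real.sqrt_nonneg _)
      _ = (π ^ 2 / 4) * Real.sqrt (∑ i ∈ S, ‖f i‖ ^ 2) * Real.sqrt (∑ j ∈ T, ‖g j‖ ^ 2) := by
          rw [e1, e2]
          ring
  exact h1.trans (hcs.trans hfin)

lemma neglog_pow_intervalIntegrable (k : ℕ) :
    IntervalIntegrable (fun x : ℝ => -Real.log x * x^k) volume 0 1 := by
  rw [intervalIntegrable_iff_integrableOn_Ioc_of_le zero_le_one]
  have hmaj : IntegrableOn (fun x : ℝ => 2 * x ^ (-(1:ℝ)/2)) (Set.Ioc (0:ℝ) 1) := by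
    have := (intervalIntegral.intervalIntegrable_rpow' (a := 0) (b := 1)
      (r := -(1:ℝ)/2) (by norm_num)).const_mul 2
    rwa [intervalIntegrable_iff_integrableOn_Ioc_of_le zero_le_one] at this
  apply Integrable.mono' hmaj
  · exact ((Real.measurable_log.neg.mul (measurable_id.pow_const k)).aestronglyMeasurable).restrict
  · filter_upwards [ae_restrict_mem measurableSet_Ioc] with x hx
    have hx0 : 0 < x := hx.1
    have hlog : 0 ≤ -Real.log x := by
      simp only [neg_nonneg]
      exact Real.log_nonpos hx0.le hx.2
    rw [Real.norm_eq_abs, abs_of_nonneg (by positivity)]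
    calc -Real.log x * x^k ≤ (2 / Real.sqrt x) * 1 := by
          apply mul_le_mul (neg_log_le hx0) (pow_le_one₀ hx0.le hx.2) (by positivity)
            (by positivity)
      _ = 2 * x ^ (-(1:ℝ)/2) := by
          rw [mul_one, Real.sqrt_eq_rpow, div_eq_mul_inv, ← Real.rpow_neg hx0.le]
          norm_num

lemma integral_neglog_pow (k : ℕ) :
    ∫ x in (0:ℝ)..1, -Real.log x * x^k = 1/((k:ℝ)+1)^2 := by
  set m : ℝ := (k:ℝ) + 1 with hm
  have hm0 : m ≠ 0 := by positivity
  set A : ℝ → ℝ := fun x => x^(k+1) * m⁻¹^2 - m⁻¹ * (x^(k+1) * Real.log x) with hA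
  have hcont : ContinuousOn A (Set.Icc (0:ℝ) 1) := by
    have hAeq : A = fun x => x^(k+1) * m⁻¹^2 - m⁻¹ * (x^k * (x * Real.log x)) := by
      funext x
      rw [hA, pow_succ]
      ring
    rw [hAeq]
    apply ContinuousOn.sub
    · exact (continuous_pow _).continuousOn.mul continuousOn_const
    · exact continuousOn_const.mul ((continuous_pow _).continuousOn.mul
        Real.continuous_mul_log.continuousOn)
  have hderiv : ∀ x ∈ Set.Ioo (0:ℝ) 1,
      HasDerivWithinAt A (-Real.log x * x^k) (Set.Ioi x) x := by
    intro x hx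
    have h1 : HasDerivAt (fun y : ℝ => y^(k+1)) ((k+1 : ℕ) * x^k) x := by
      simpa using hasDerivAt_pow (k+1) x
    have h2 : HasDerivAt (fun y : ℝ => y^(k+1) * Real.log y)
        ((k+1 : ℕ) * x^k * Real.log x + x^(k+1) * x⁻¹) x :=
      h1.mul (Real.hasDerivAt_log hx.1.ne')
    have h3 : HasDerivAt A ((k+1 : ℕ) * x^k * m⁻¹^2 -
        m⁻¹ * ((k+1 : ℕ) * x^k * Real.log x + x^(k+1) * x⁻¹)) x :=
      (h1.mul_const _).sub (h2.const_mul _)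
    have heq : (k+1 : ℕ) * x^k * m⁻¹^2 -
        m⁻¹ * ((k+1 : ℕ) * x^k * Real.log x + x^(k+1) * x⁻¹) = -Real.log x * x^k := by
      have hxk : x^(k+1) * x⁻¹ = x^k := by
        rw [pow_succ, mul_assoc, mul_inv_cancel₀ hx.1.ne', mul_one]
      have hmc : ((k:ℝ)+1) * m⁻¹ = 1 := by
        rw [hm, mul_inv_cancel₀]
        positivity
      push_cast
      rw [hxk]
      field_simp
      ring
    rw [← heq]
    exact h3.hasDerivWithinAt
  have := intervalIntegral.integral_eq_sub_of_hasDeriv_right_of_le zero_le_one hcont hderiv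
    (neglog_pow_intervalIntegrable k)
  rw [this, hA]
  simp [Real.log_one, zero_pow (Nat.succ_ne_zero k)]

lemma summable_odd_sq : Summable (fun n : ℕ => (1:ℝ) / (2*(n:ℝ)+1)^2) := by
  have h : Summable (fun n : ℕ => (1:ℝ) / (n:ℝ)^2) := Real.summable_one_div_nat_pow.2 one_lt_two
  have h2 := h.comp_injective (i := fun n : ℕ => 2*n+1) (fun a b hab => by dsimp at hab; omega)
  apply h2.congr
  intro n
  simp only [Function.comp]
  push_cast
  ring_nf

lemma hasSum_odd_sq : HasSum (fun n : ℕ => (1:ℝ) / (2*(n:ℝ)+1)^2) (π^2/8) := by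
  obtain ⟨b, hb⟩ := summable_odd_sq
  set f : ℕ → ℝ := fun n => (1:ℝ)/(n:ℝ)^2 with hf
  have heven : HasSum (fun k : ℕ => f (2*k)) (π^2/6/4) := by
    have h4 := hasSum_zeta_two.div_const 4
    have hfe : (fun k : ℕ => f (2*k)) = fun k : ℕ => (1:ℝ)/(k:ℝ)^2/4 := by
      funext k
      rcases Nat.eq_zero_or_pos k with rfl | hk
      · norm_num [hf]
      · have hk0 : (k:ℝ) ≠ 0 := by positivity
        simp only [hf]
        push_cast
        field_simp
        ring
    rw [hfe]
    exact h4
  have hodd : HasSum (fun k : ℕ => f (2*k+1)) b := by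
    have hfe2 : (fun k : ℕ => f (2*k+1)) = (fun n : ℕ => (1:ℝ)/(2*(n:ℝ)+1)^2) := by
      funext k
      simp only [hf]
      push_cast
      ring_nf
    rw [hfe2]
    exact hb
  have hsum := heven.even_add_odd hodd
  have huniq : π^2/6/4 + b = π^2/6 := hsum.unique hasSum_zeta_two
  have hb8 : b = π^2/8 := by linarith
  rwa [hb8] at hb

lemma Fn_integrableOn (n : ℕ) :
    IntegrableOn (fun x : ℝ => -Real.log x * x^(2*n)) (Set.Ioo (0:ℝ) 1) := by
  have h := neglog_pow_intervalIntegrable (2*n)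
  rw [intervalIntegrable_iff_integrableOn_Ioc_of_le zero_le_one] at h
  exact h.mono_set Set.Ioo_subset_Ioc_self

lemma Fn_integral (n : ℕ) :
    ∫ x in Set.Ioo (0:ℝ) 1, -Real.log x * x^(2*n) = 1/(2*(n:ℝ)+1)^2 := by
  have h1 : ∫ x in Set.Ioo (0:ℝ) 1, -Real.log x * x^(2*n)
      = ∫ x in (0:ℝ)..1, -Real.log x * x^(2*n) := by
    rw [intervalIntegral.integral_of_le zero_le_one, integral_Ioc_eq_integral_Ioo]
  rw [h1, integral_neglog_pow (2*n)]
  push_cast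
  ring_nf

lemma intJ : ∫ x in Set.Ioo (0:ℝ) 1, gk x = π^2/8 := by
  have hpt : ∀ x ∈ Set.Ioo (0:ℝ) 1, gk x = ∑' n : ℕ, -Real.log x * x^(2*n) := by
    intro x hx
    have hx2 : x^2 < 1 := by nlinarith [hx.1, hx.2]
    have hden : x^2 - 1 ≠ 0 := by nlinarith
    have hgeom : ∑' n : ℕ, (x^2)^n = (1 - x^2)⁻¹ :=
      tsum_geometric_of_lt_one (by positivity) hx2
    have : (fun n : ℕ => -Real.log x * x^(2*n)) = fun n : ℕ => -Real.log x * (x^2)^n := by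
      funext n
      rw [pow_mul]
    have hden2 : (1:ℝ) - x^2 ≠ 0 := fun hc => hden (by linarith)
    rw [gk, if_neg hx.2.ne, this, tsum_mul_left, hgeom]
    field_simp
    ring
  rw [setIntegral_congr_fun measurableSet_Ioo hpt]
  have hmeas : ∀ n : ℕ, AEStronglyMeasurable (fun x : ℝ => -Real.log x * x^(2*n))
      (volume.restrict (Set.Ioo (0:ℝ) 1)) := fun n =>
    ((Real.measurable_log.neg.mul (measurable_id.pow_const (2*n))).aestronglyMeasurable).restrict
  have hlin : ∀ n : ℕ, ∫⁻ x in Set.Ioo (0:ℝ) 1, ‖-Real.log x * x^(2*n)‖ₑ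
      = ENNReal.ofReal (1/(2*(n:ℝ)+1)^2) := by
    intro n
    rw [← Fn_integral n, ofReal_integral_eq_lintegral_ofReal (Fn_integrableOn n)]
    · apply lintegral_congr_ae
      filter_upwards [ae_restrict_mem measurableSet_Ioo] with x hx
      have h0 : 0 ≤ -Real.log x * x^(2*n) :=
        mul_nonneg (neg_nonneg.2 (Real.log_nonpos hx.1.le hx.2.le)) (pow_nonneg hx.1.le _)
      rw [← Real.enorm_eq_ofReal h0]
    · filter_upwards [ae_restrict_mem measurableSet_Ioo] with x hx
      exact mul_nonneg (neg_nonneg.2 (Real.log_nonpos hx.1.le hx.2.le)) (pow_nonneg hx.1.le _)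
  rw [integral_tsum hmeas]
  · have : (fun n : ℕ => ∫ x in Set.Ioo (0:ℝ) 1, -Real.log x * x^(2*n))
        = fun n : ℕ => 1/(2*(n:ℝ)+1)^2 := funext fun n => Fn_integral n
    rw [this, hasSum_odd_sq.tsum_eq]
  · rw [funext hlin, ← ENNReal.ofReal_tsum_of_nonneg (fun n => by positivity) summable_odd_sq]
    exact ENNReal.ofReal_ne_top

lemma int_tail : ∫ x in Set.Ioi (1:ℝ), gk x = ∫ x in Set.Ioo (0:ℝ) 1, gk x := by
  have himg : (fun x : ℝ => x⁻¹) '' Set.Ioi 1 = Set.Ioo 0 1 := by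
    ext y
    simp only [Set.mem_image, Set.mem_Ioi, Set.mem_Ioo]
    constructor
    · rintro ⟨x, hx, rfl⟩
      have hx0 : 0 < x := lt_trans zero_lt_one hx
      exact ⟨inv_pos.2 hx0, by rw [inv_lt_one_iff₀]; exact Or.inr hx⟩
    · rintro ⟨h0, h1⟩
      refine ⟨y⁻¹, ?_, inv_inv y⟩
      rw [one_lt_inv_iff₀]
      exact ⟨h0, h1⟩
  have hd : ∀ x ∈ Set.Ioi (1:ℝ), HasDerivWithinAt (fun y : ℝ => y⁻¹) (-(x^2)⁻¹) (Set.Ioi 1) x :=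
    fun x hx => (hasDerivAt_inv (ne_of_gt (lt_trans zero_lt_one hx))).hasDerivWithinAt
  have hinj : Set.InjOn (fun x : ℝ => x⁻¹) (Set.Ioi 1) :=
    fun a _ b _ hab => inv_injective hab
  have h := MeasureTheory.integral_image_eq_integral_abs_deriv_smul measurableSet_Ioi hd hinj gk
  rw [himg] at h
  rw [h]
  apply setIntegral_congr_fun measurableSet_Ioi
  intro x hx
  have hx1 : (1:ℝ) < x := hx
  have hx0 : (0:ℝ) < x := lt_trans zero_lt_one hx1
  have hxinv1 : x⁻¹ ≠ 1 := by
    have : x⁻¹ < 1 := by rw [inv_lt_one_iff₀]; exact Or.inr hx1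
    exact this.ne
  have hne : x^2 - 1 ≠ 0 := by nlinarith
  have hne2 : (x⁻¹)^2 - 1 ≠ 0 := by
    intro hc
    have : x⁻¹ = 1 ∨ x⁻¹ = -1 := by
      have h2 : (x⁻¹ - 1) * (x⁻¹ + 1) = 0 := by ring_nf; ring_nf at hc; linarith
      rcases mul_eq_zero.1 h2 with h3 | h3
      · left; linarith
      · right; linarith
    rcases this with h3 | h3
    · exact hxinv1 h3
    · have : (0:ℝ) < x⁻¹ := inv_pos.2 hx0
      rw [h3] at this
      linarith
  simp only [smul_eq_mul]
  have hne3 : x^2 - x^4 ≠ 0 := by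
    intro hc
    apply hne
    have h5 : x^2*(x^2-1) = 0 := by ring_nf; ring_nf at hc; linarith
    rcases mul_eq_zero.1 h5 with h6 | h6
    · exact absurd h6 (by positivity)
    · exact h6
  rw [gk, if_neg hx1.ne', gk, if_neg hxinv1, Real.log_inv, abs_neg, abs_inv,
    abs_of_nonneg (by positivity : (0:ℝ) ≤ x^2)]
  field_simp [hne3]
  have hne4 : x^2 * (1 - x^2) ≠ 0 := by
    intro hc
    apply hne3
    ring_nf
    ring_nf at hc
    linarith
  rw [show (1:ℝ) - x^2 = -(x^2 - 1) by ring, div_neg, neg_neg, mul_div_assoc, div_self hne,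
    mul_one]

lemma intI : ∫ x in Set.Ioi (0:ℝ), gk x = π^2/4 := by
  have hdisj : Disjoint (Set.Ioc (0:ℝ) 1) (Set.Ioi (1:ℝ)) := Set.Ioc_disjoint_Ioi le_rfl
  have hunion : Set.Ioc (0:ℝ) 1 ∪ Set.Ioi 1 = Set.Ioi 0 := Set.Ioc_union_Ioi_eq_Ioi zero_le_one
  have h1 : IntegrableOn gk (Set.Ioc (0:ℝ) 1) :=
    integrable_gk.mono_set (fun x hx => hx.1)
  have h2 : IntegrableOn gk (Set.Ioi (1:ℝ)) :=
    integrable_gk.mono_set (fun x hx => mem_Ioi.2 (lt_trans zero_lt_one hx))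
  have := setIntegral_union hdisj measurableSet_Ioi h1 h2 (f := gk)
  rw [hunion] at this
  rw [this, integral_Ioc_eq_integral_Ioo, intJ, int_tail, intJ]
  ring

/-- The matrix `P` defines a bounded operator on `ℓ²` with norm at most
`∫₀^∞ (log x)/(x²-1) dx = π²/4`: for all finitely supported `f, g`,
`|∑_{i,j} g_j P_{ij} f_i| ≤ (π²/4)‖f‖‖g‖`. -/
theorem stmt_7 :
    (∫ x in Ioi (0 : ℝ), Real.log x / (x ^ 2 - 1)) = π ^ 2 / 4 ∧
    ∀ f g : ℕ+ →₀ ℂ,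
      ‖∑ i ∈ f.support, ∑ j ∈ g.support, g j * (Pent i j : ℂ) * f i‖ ≤
        (π ^ 2 / 4) * Real.sqrt (∑ i ∈ f.support, ‖f i‖ ^ 2) *
          Real.sqrt (∑ j ∈ g.support, ‖g j‖ ^ 2) := by
  constructor
  · have hae : (fun x : ℝ => Real.log x / (x ^ 2 - 1)) =ᵐ[volume.restrict (Set.Ioi (0:ℝ))] gk := by
      have h1 : ∀ᵐ x : ℝ, x ≠ (1:ℝ) := by
        rw [ae_iff]
        convert Real.volume_singleton (a := 1) using 2
        ext x
        simp
      filter_upwards [ae_restrict_of_ae h1] with x hx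
      rw [gk, if_neg hx]
    rw [integral_congr_ae hae, intI]
  · exact fun f g => bound_part intI f g
end

section
/- For every b > 1 and every ε ∈ (0, 1/2), the integral I(ε; b) = ∫₁^∞ (1 − e^{−εt}) / (√(1+t²)(ε²t² + b²)) dt satisfies |I(ε;b) − C₀(b)| ≤ C ε (1 + |log ε|) / b², where C₀(b) = ∫₀^∞ (1 − e^{−t})/(t(t² + b²)) dt and C is an absolute constant independent of b and ε. -/
open Real MeasureTheory Set

/-! The substitution `s = εt` turns `I(ε;b)` into `∫_ε^∞ w(s) / √(ε² + s²) ds` with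
`w(s) = (1 - e^{-s})/(s² + b²)`, while `C₀(b) = ∫_0^∞ w(s)/s ds`. Since `0 ≤ w(s) ≤ s/b²`, the
piece of `C₀(b)` over `(0, ε]` is at most `ε/b²`, and on `(ε, ∞)` the integrands differ by
`w(s) (1/s - 1/√(ε² + s²)) ≤ (s/b²) · ε²/(2s³)`, which integrates to `ε/(2b²)`. -/

noncomputable def expWeight (b s : ℝ) : ℝ := (1 - exp (-s)) / (s ^ 2 + b ^ 2)

section expWeight

variable {b s : ℝ}

lemma expWeight_nonneg (hs : 0 ≤ s) : 0 ≤ expWeight b s :=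
  div_nonneg (sub_nonneg.2 (exp_le_one_iff.2 (neg_nonpos.2 hs))) (by positivity)

lemma expWeight_le : expWeight b s ≤ s / (s ^ 2 + b ^ 2) :=
  div_le_div_of_nonneg_right (by linarith [one_sub_le_exp_neg s]) (by positivity)

lemma expWeight_le_div_sq (hb : b ≠ 0) (hs : 0 ≤ s) : expWeight b s ≤ s / b ^ 2 :=
  expWeight_le.trans (div_le_div_of_nonneg_left hs (by positivity) (by nlinarith))

lemma norm_expWeight_mul_inv_le (hs : 0 ≤ s) : ‖expWeight b s * s⁻¹‖ ≤ (s ^ 2 + b ^ 2)⁻¹ := by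
  rw [norm_of_nonneg (mul_nonneg (expWeight_nonneg hs) (inv_nonneg.2 hs))]
  rcases hs.eq_or_lt with rfl | hs
  · simp only [expWeight, inv_zero, mul_zero]; positivity
  calc expWeight b s * s⁻¹ ≤ s / (s ^ 2 + b ^ 2) * s⁻¹ := by
        gcongr; exact expWeight_le
    _ = (s ^ 2 + b ^ 2)⁻¹ := by field_simp

end expWeight

lemma measurable_expWeight (b : ℝ) : Measurable (expWeight b) := by
  unfold expWeight; fun_prop

lemma inv_sqrt_sq_add_sq_le_inv (ε : ℝ) {s : ℝ} (hs : 0 < s) : (√(ε ^ 2 + s ^ 2))⁻¹ ≤ s⁻¹ :=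
  inv_anti₀ hs (le_sqrt_of_sq_le (le_add_of_nonneg_left (sq_nonneg ε)))

lemma inv_sub_inv_sqrt_sq_add_sq_le (ε : ℝ) {s : ℝ} (hs : 0 < s) :
    s⁻¹ - (√(ε ^ 2 + s ^ 2))⁻¹ ≤ ε ^ 2 / 2 * (s ^ 2)⁻¹ * s⁻¹ := by
  set Q := √(ε ^ 2 + s ^ 2)
  have hsQ : s ≤ Q := le_sqrt_of_sq_le (le_add_of_nonneg_left (sq_nonneg ε))
  have hQ : 0 < Q := hs.trans_le hsQ
  have hQsq : Q ^ 2 = ε ^ 2 + s ^ 2 := sq_sqrt (by positivity)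
  rw [inv_sub_inv hs.ne' hQ.ne', div_le_iff₀ (by positivity)]
  -- `ε² = (Q - s)(Q + s)` and `Q ≥ s`
  have : 0 ≤ (Q - s) * ((Q + s) * Q - 2 * s ^ 2) :=
    mul_nonneg (sub_nonneg.2 hsQ) (by nlinarith)
  field_simp
  nlinarith

lemma integrableOn_Ioi_inv_sq {ε : ℝ} (hε : 0 < ε) :
    IntegrableOn (fun s : ℝ => (s ^ 2)⁻¹) (Ioi ε) :=
  (integrableOn_Ioi_rpow_of_lt (by norm_num : (-2 : ℝ) < -1) hε).congr_fun
    (fun s hs => by dsimp only; rw [rpow_neg (hε.trans hs).le, rpow_two]) measurableSet_Ioi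

lemma integral_Ioi_inv_sq {ε : ℝ} (hε : 0 < ε) : ∫ s in Ioi ε, (s ^ 2)⁻¹ = ε⁻¹ := by
  have h : EqOn (fun s : ℝ => s ^ (-2 : ℝ)) (fun s => (s ^ 2)⁻¹) (Ioi ε) := fun s hs => by
    dsimp only; rw [rpow_neg (hε.trans hs).le, rpow_two]
  rw [← setIntegral_congr_fun measurableSet_Ioi h, integral_Ioi_rpow_of_lt (by norm_num) hε]
  norm_num [rpow_neg_one]

section integrals

variable {b ε : ℝ}

lemma integrableOn_expWeight_mul_inv_Ioi (hε : 0 < ε) :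
    IntegrableOn (fun s => expWeight b s * s⁻¹) (Ioi ε) := by
  refine (integrableOn_Ioi_inv_sq hε).mono'
    ((measurable_expWeight b).mul measurable_inv).aestronglyMeasurable ?_
  filter_upwards [ae_restrict_mem measurableSet_Ioi] with s hs
  have hs : 0 < s := hε.trans hs
  exact (norm_expWeight_mul_inv_le hs.le).trans
    (inv_anti₀ (by positivity) (le_add_of_nonneg_right (sq_nonneg b)))

lemma integrableOn_expWeight_mul_inv_Ioc (hb : b ≠ 0) :
    IntegrableOn (fun s => expWeight b s * s⁻¹) (Ioc 0 ε) := by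
  refine Measure.integrableOn_of_bounded (M := (b ^ 2)⁻¹) measure_Ioc_lt_top.ne
    ((measurable_expWeight b).mul measurable_inv).aestronglyMeasurable ?_
  filter_upwards [ae_restrict_mem measurableSet_Ioc] with s hs
  exact (norm_expWeight_mul_inv_le hs.1.le).trans
    (inv_anti₀ (by positivity) (le_add_of_nonneg_left (sq_nonneg s)))

lemma integrableOn_expWeight_mul_inv_sqrt_Ioi (hε : 0 < ε) :
    IntegrableOn (fun s => expWeight b s * (√(ε ^ 2 + s ^ 2))⁻¹) (Ioi ε) := by
  refine Integrable.mono (integrableOn_expWeight_mul_inv_Ioi (b := b) hε)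
    ((measurable_expWeight b).mul (by fun_prop)).aestronglyMeasurable ?_
  filter_upwards [ae_restrict_mem measurableSet_Ioi] with s hs
  have hs : 0 < s := hε.trans hs
  have hw := expWeight_nonneg (b := b) hs.le
  rw [norm_of_nonneg (by positivity), norm_of_nonneg (by positivity)]
  exact mul_le_mul_of_nonneg_left (inv_sqrt_sq_add_sq_le_inv ε hs) hw

lemma abs_setIntegral_Ioc_expWeight_mul_inv_le (hb : b ≠ 0) (hε : 0 ≤ ε) :
    |∫ s in Ioc 0 ε, expWeight b s * s⁻¹| ≤ ε / b ^ 2 := by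
  have := norm_setIntegral_le_of_norm_le_const (f := fun s => expWeight b s * s⁻¹)
    (C := (b ^ 2)⁻¹) (measure_Ioc_lt_top (μ := volume) (a := 0) (b := ε))
    fun s hs => (norm_expWeight_mul_inv_le hs.1.le).trans
      (inv_anti₀ (by positivity) (le_add_of_nonneg_left (sq_nonneg s)))
  rwa [Real.volume_real_Ioc_of_le hε, sub_zero, inv_mul_eq_div] at this

lemma setIntegral_Ioi_expWeight_mul_inv_sub_inv_sqrt_le (hb : b ≠ 0) (hε : 0 < ε) :
    ∫ s in Ioi ε, expWeight b s * (s⁻¹ - (√(ε ^ 2 + s ^ 2))⁻¹) ≤ ε / (2 * b ^ 2) := by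
  calc ∫ s in Ioi ε, expWeight b s * (s⁻¹ - (√(ε ^ 2 + s ^ 2))⁻¹)
      ≤ ∫ s in Ioi ε, ε ^ 2 / (2 * b ^ 2) * (s ^ 2)⁻¹ := by
        refine setIntegral_mono_on ?_ ((integrableOn_Ioi_inv_sq hε).const_mul _) measurableSet_Ioi
          fun s hs => ?_
        · simp_rw [mul_sub]
          exact (integrableOn_expWeight_mul_inv_Ioi hε).sub
            (integrableOn_expWeight_mul_inv_sqrt_Ioi hε)
        have hs : 0 < s := hε.trans hs
        calc expWeight b s * (s⁻¹ - (√(ε ^ 2 + s ^ 2))⁻¹)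
            ≤ s / b ^ 2 * (ε ^ 2 / 2 * (s ^ 2)⁻¹ * s⁻¹) :=
              mul_le_mul (expWeight_le_div_sq hb hs.le) (inv_sub_inv_sqrt_sq_add_sq_le ε hs)
                (sub_nonneg.2 (inv_sqrt_sq_add_sq_le_inv ε hs)) (by positivity)
          _ = ε ^ 2 / (2 * b ^ 2) * (s ^ 2)⁻¹ := by field_simp
    _ = ε / (2 * b ^ 2) := by
        rw [integral_const_mul, integral_Ioi_inv_sq hε]
        field_simp

lemma setIntegral_Ioi_expWeight_mul_inv_sub_inv_sqrt_nonneg (hε : 0 < ε) :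
    0 ≤ ∫ s in Ioi ε, expWeight b s * (s⁻¹ - (√(ε ^ 2 + s ^ 2))⁻¹) :=
  setIntegral_nonneg measurableSet_Ioi fun _ hs =>
    mul_nonneg (expWeight_nonneg (hε.trans hs).le)
      (sub_nonneg.2 (inv_sqrt_sq_add_sq_le_inv ε (hε.trans hs)))

end integrals

lemma abs_setIntegral_Ioi_expWeight_mul_inv_sqrt_sub_le {b ε : ℝ} (hb : b ≠ 0) (hε : 0 < ε) :
    |(∫ s in Ioi ε, expWeight b s * (√(ε ^ 2 + s ^ 2))⁻¹) - ∫ s in Ioi 0, expWeight b s * s⁻¹|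
      ≤ 3 * ε / (2 * b ^ 2) := by
  set D := ∫ s in Ioi ε, expWeight b s * (s⁻¹ - (√(ε ^ 2 + s ^ 2))⁻¹)
  set A := ∫ s in Ioc 0 ε, expWeight b s * s⁻¹
  have hsplit : ∫ s in Ioi 0, expWeight b s * s⁻¹ = A + ∫ s in Ioi ε, expWeight b s * s⁻¹ := by
    rw [← setIntegral_union (Ioc_disjoint_Ioi le_rfl) measurableSet_Ioi
      (integrableOn_expWeight_mul_inv_Ioc hb) (integrableOn_expWeight_mul_inv_Ioi hε),
      Ioc_union_Ioi_eq_Ioi hε.le]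
  have hD : D = (∫ s in Ioi ε, expWeight b s * s⁻¹) -
      ∫ s in Ioi ε, expWeight b s * (√(ε ^ 2 + s ^ 2))⁻¹ := by
    simp_rw [D, mul_sub]
    exact integral_sub (integrableOn_expWeight_mul_inv_Ioi hε)
      (integrableOn_expWeight_mul_inv_sqrt_Ioi hε)
  have hD₀ : 0 ≤ D := setIntegral_Ioi_expWeight_mul_inv_sub_inv_sqrt_nonneg hε
  have hD₁ : D ≤ ε / (2 * b ^ 2) := setIntegral_Ioi_expWeight_mul_inv_sub_inv_sqrt_le hb hε
  have hA : |A| ≤ ε / b ^ 2 := abs_setIntegral_Ioc_expWeight_mul_inv_le hb hε.le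
  calc _ = |-D - A| := by rw [hsplit, hD]; ring_nf
    _ ≤ |-D| + |A| := abs_sub _ _
    _ ≤ 3 * ε / (2 * b ^ 2) := by
        have : 3 * ε / (2 * b ^ 2) = ε / (2 * b ^ 2) + ε / b ^ 2 := by field_simp; ring
        rw [abs_neg, abs_of_nonneg hD₀, this]
        exact add_le_add hD₁ hA

/-- The substitution `s = εt`. -/
lemma setIntegral_Ioi_one_eq_setIntegral_Ioi (b : ℝ) {ε : ℝ} (hε : 0 < ε) :
    ∫ t in Ioi (1 : ℝ), (1 - exp (-(ε * t))) / (√(1 + t ^ 2) * (ε ^ 2 * t ^ 2 + b ^ 2)) =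
      ∫ s in Ioi ε, expWeight b s * (√(ε ^ 2 + s ^ 2))⁻¹ := by
  have hpt (t : ℝ) : (1 - exp (-(ε * t))) / (√(1 + t ^ 2) * (ε ^ 2 * t ^ 2 + b ^ 2)) =
      ε * (expWeight b (ε * t) * (√(ε ^ 2 + (ε * t) ^ 2))⁻¹) := by
    rw [show ε ^ 2 + (ε * t) ^ 2 = ε ^ 2 * (1 + t ^ 2) by ring, sqrt_mul (sq_nonneg ε),
      sqrt_sq hε.le, expWeight]
    have : 0 < √(1 + t ^ 2) := sqrt_pos.2 (by positivity)
    field_simp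
  simp_rw [hpt]
  rw [integral_const_mul,
    integral_comp_mul_left_Ioi (fun s => expWeight b s * (√(ε ^ 2 + s ^ 2))⁻¹) 1 hε, mul_one,
    smul_eq_mul, mul_inv_cancel_left₀ hε.ne']

/-- For `b > 1` and `ε ∈ (0, 1/2)`,
`I(ε;b) = ∫₁^∞ (1 - e^{-εt})/(√(1+t²)(ε²t² + b²)) dt` satisfies
`|I(ε;b) - C₀(b)| ≤ C ε (1 + |log ε|)/b²` for an absolute constant `C`,
where `C₀(b) = ∫₀^∞ (1 - e^{-t})/(t(t² + b²)) dt`. -/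
theorem stmt_9 :
    ∃ C : ℝ, 0 < C ∧ ∀ b : ℝ, 1 < b → ∀ ε : ℝ, 0 < ε → ε < 1 / 2 →
      |(∫ t in Ioi (1 : ℝ),
          (1 - Real.exp (-(ε * t))) / (Real.sqrt (1 + t ^ 2) * (ε ^ 2 * t ^ 2 + b ^ 2))) -
        ∫ t in Ioi (0 : ℝ), (1 - Real.exp (-t)) / (t * (t ^ 2 + b ^ 2))| ≤
      C * ε * (1 + |Real.log ε|) / b ^ 2 := by
  refine ⟨3 / 2, by norm_num, fun b hb ε hε _ => ?_⟩
  have hC₀ : ∫ t in Ioi (0 : ℝ), (1 - exp (-t)) / (t * (t ^ 2 + b ^ 2)) =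
      ∫ s in Ioi 0, expWeight b s * s⁻¹ := by
    simp_rw [expWeight, div_mul_eq_div_div_swap, div_eq_mul_inv]
  rw [setIntegral_Ioi_one_eq_setIntegral_Ioi b hε, hC₀]
  calc _ ≤ 3 * ε / (2 * b ^ 2) :=
        abs_setIntegral_Ioi_expWeight_mul_inv_sqrt_sub_le (by positivity) hε
    _ = 3 / 2 * ε * 1 / b ^ 2 := by ring
    _ ≤ 3 / 2 * ε * (1 + |log ε|) / b ^ 2 := by
        gcongr; exact le_add_of_nonneg_right (abs_nonneg _)
end

section
/- For all real b ≥ b' > e and every ε ∈ (0, 1/2), the integral K⁻(ε; b, b') = ∫₁^∞ ε²t²(1 − e^{−εt}) / (√(1+t²)(ε²t² + b²)(ε²t² + b'²)) dt satisfies |K⁻(ε;b,b') − C₀⁻(b,b')| ≤ C ε² (log b − log b' + b'^{−2})/(b² − b'²) for an absolute constant C, where C₀⁻(b,b') = ∫₀^∞ t(1 − e^{−t})/((t²+b²)(t²+b'²)) dt and for b = b' the factor (log b − log b')/(b² − b'²) is interpreted as 1/(2b²). -/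
open Real MeasureTheory Set

/-!
Substituting `s = ε t` turns `K⁻(ε; b, b')` into `∫_ε^∞ s/√(ε² + s²) · h(s) ds`, where `h` is the
integrand of `C₀⁻(b, b')`. Hence `C₀⁻ - K⁻` is the integral of `h` over `(0, ε]` plus that of
`(1 - s/√(ε² + s²)) h(s)` over `(ε, ∞)`. Both are `O(ε²/b'²)`, because
`h(s) ≤ s²/(b'²(1 + s²))` once `b ≥ 1` and `1 - s/√(ε² + s²) ≤ ε²/(2s²)`.
-/

noncomputable def c0Integrand (b b' s : ℝ) : ℝ :=
  s * (1 - exp (-s)) / ((s ^ 2 + b ^ 2) * (s ^ 2 + b' ^ 2))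

/-- The integrand of `K⁻(ε; b, b')` after the substitution `s = ε t`. -/
noncomputable def kIntegrand (ε b b' s : ℝ) : ℝ :=
  s / √(ε ^ 2 + s ^ 2) * c0Integrand b b' s

section Pointwise

variable {ε b b' s : ℝ}

lemma div_sqrt_sq_add_sq_mem_Icc (hs : 0 ≤ s) : s / √(ε ^ 2 + s ^ 2) ∈ Icc 0 1 := by
  refine ⟨by positivity, div_le_one_of_le₀ ?_ (sqrt_nonneg _)⟩
  exact le_sqrt_of_sq_le (by nlinarith)

lemma one_sub_div_sqrt_sq_add_sq_le (hs : 0 < s) :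
    1 - s / √(ε ^ 2 + s ^ 2) ≤ ε ^ 2 / (2 * s ^ 2) := by
  set r := √(ε ^ 2 + s ^ 2)
  have hr_sq : r ^ 2 = ε ^ 2 + s ^ 2 := sq_sqrt (by positivity)
  have hsr : s ≤ r := le_sqrt_of_sq_le (by nlinarith)
  have hr_pos : 0 < r := hs.trans_le hsr
  -- `ε² r - 2 s² (r - s) = (r - s) (r (r + s) - 2 s²)` since `ε² = (r - s)(r + s)`
  rw [one_sub_div hr_pos.ne', div_le_div_iff₀ hr_pos (by positivity)]
  nlinarith [mul_nonneg (sub_nonneg.2 hsr) (mul_nonneg hr_pos.le (sub_nonneg.2 hsr))]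

lemma c0Integrand_nonneg (hs : 0 ≤ s) : 0 ≤ c0Integrand b b' s := by
  have : 0 ≤ 1 - exp (-s) := sub_nonneg.2 (exp_le_one_iff.2 (neg_nonpos.2 hs))
  unfold c0Integrand
  positivity

lemma c0Integrand_le (hs : 0 ≤ s) :
    c0Integrand b b' s ≤ s ^ 2 / ((s ^ 2 + b ^ 2) * (s ^ 2 + b' ^ 2)) := by
  have : 1 - exp (-s) ≤ s := by linarith [add_one_le_exp (-s)]
  exact div_le_div_of_nonneg_right (by nlinarith) (by positivity)

lemma c0Integrand_le_inv_one_add_sq (hb : 1 ≤ b) (hs : 0 ≤ s) :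
    c0Integrand b b' s ≤ (1 + s ^ 2)⁻¹ := by
  have hb_sq : 1 ≤ b ^ 2 := one_le_pow₀ hb
  calc c0Integrand b b' s ≤ s ^ 2 / ((s ^ 2 + b ^ 2) * (s ^ 2 + b' ^ 2)) := c0Integrand_le hs
    _ = s ^ 2 / (s ^ 2 + b' ^ 2) * (s ^ 2 + b ^ 2)⁻¹ := by
      rw [mul_comm (s ^ 2 + b ^ 2), ← div_div, div_eq_mul_inv]
    _ ≤ 1 * (1 + s ^ 2)⁻¹ :=
      mul_le_mul (div_le_one_of_le₀ (le_add_of_nonneg_right (sq_nonneg b')) (by positivity))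
        (inv_anti₀ (by positivity) (by linarith)) (by positivity) zero_le_one
    _ = (1 + s ^ 2)⁻¹ := one_mul _

lemma c0Integrand_le_sq_div (hb : 1 ≤ b) (hb' : 0 < b') (hs : 0 ≤ s) :
    c0Integrand b b' s ≤ s ^ 2 / b' ^ 2 * (1 + s ^ 2)⁻¹ := by
  calc c0Integrand b b' s ≤ s ^ 2 / ((s ^ 2 + b ^ 2) * (s ^ 2 + b' ^ 2)) := c0Integrand_le hs
    _ ≤ s ^ 2 / ((s ^ 2 + 1) * b' ^ 2) := by gcongr <;> nlinarith
    _ = s ^ 2 / b' ^ 2 * (1 + s ^ 2)⁻¹ := by field_simp; ring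

lemma kIntegrand_nonneg (hs : 0 ≤ s) : 0 ≤ kIntegrand ε b b' s :=
  mul_nonneg (div_sqrt_sq_add_sq_mem_Icc hs).1 (c0Integrand_nonneg hs)

lemma kIntegrand_le_c0Integrand (hs : 0 ≤ s) : kIntegrand ε b b' s ≤ c0Integrand b b' s :=
  mul_le_of_le_one_left (c0Integrand_nonneg hs) (div_sqrt_sq_add_sq_mem_Icc hs).2

lemma c0Integrand_sub_kIntegrand_le (hb : 1 ≤ b) (hb' : 0 < b') (hs : 0 < s) :
    c0Integrand b b' s - kIntegrand ε b b' s ≤ ε ^ 2 / (2 * b' ^ 2) * (1 + s ^ 2)⁻¹ :=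
  calc c0Integrand b b' s - kIntegrand ε b b' s
      = (1 - s / √(ε ^ 2 + s ^ 2)) * c0Integrand b b' s := by unfold kIntegrand; ring
    _ ≤ ε ^ 2 / (2 * s ^ 2) * (s ^ 2 / b' ^ 2 * (1 + s ^ 2)⁻¹) :=
      mul_le_mul (one_sub_div_sqrt_sq_add_sq_le hs) (c0Integrand_le_sq_div hb hb' hs.le)
        (c0Integrand_nonneg hs.le) (by positivity)
    _ = ε ^ 2 / (2 * b' ^ 2) * (1 + s ^ 2)⁻¹ := by field_simp

end Pointwise

section Integrals

variable {ε b b' : ℝ}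

@[fun_prop]
lemma measurable_c0Integrand : Measurable (c0Integrand b b') := by
  unfold c0Integrand; fun_prop

@[fun_prop]
lemma measurable_kIntegrand : Measurable (kIntegrand ε b b') := by
  unfold kIntegrand; fun_prop

lemma integrableOn_c0Integrand (hb : 1 ≤ b) : IntegrableOn (c0Integrand b b') (Ioi 0) := by
  refine integrable_inv_one_add_sq.integrableOn.mono' (by fun_prop) ?_
  filter_upwards [self_mem_ae_restrict measurableSet_Ioi] with s hs
  rw [norm_of_nonneg (c0Integrand_nonneg hs.le)]
  exact c0Integrand_le_inv_one_add_sq hb hs.le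

lemma integrableOn_kIntegrand (hb : 1 ≤ b) : IntegrableOn (kIntegrand ε b b') (Ioi 0) := by
  refine (integrableOn_c0Integrand (b' := b') hb).mono' (by fun_prop) ?_
  filter_upwards [self_mem_ae_restrict measurableSet_Ioi] with s hs
  rw [norm_of_nonneg (kIntegrand_nonneg hs.le)]
  exact kIntegrand_le_c0Integrand hs.le

lemma setIntegral_Ioi_one_rescale (hε : 0 < ε) :
    ∫ t in Ioi (1 : ℝ), ε ^ 2 * t ^ 2 * (1 - exp (-(ε * t))) /
        (√(1 + t ^ 2) * (ε ^ 2 * t ^ 2 + b ^ 2) * (ε ^ 2 * t ^ 2 + b' ^ 2)) =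
      ∫ s in Ioi ε, kIntegrand ε b b' s := by
  have hsqrt (t : ℝ) : √(ε ^ 2 + (ε * t) ^ 2) = ε * √(1 + t ^ 2) := by
    rw [show ε ^ 2 + (ε * t) ^ 2 = ε ^ 2 * (1 + t ^ 2) by ring, sqrt_mul (sq_nonneg ε),
      sqrt_sq hε.le]
  have hpoint (t : ℝ) : ε ^ 2 * t ^ 2 * (1 - exp (-(ε * t))) /
      (√(1 + t ^ 2) * (ε ^ 2 * t ^ 2 + b ^ 2) * (ε ^ 2 * t ^ 2 + b' ^ 2)) =
        ε * kIntegrand ε b b' (ε * t) := by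
    have : 0 < √(1 + t ^ 2) := sqrt_pos.2 (by positivity)
    unfold kIntegrand c0Integrand
    rw [hsqrt]
    field_simp
  simp_rw [hpoint, integral_const_mul, integral_comp_mul_left_Ioi _ _ hε, mul_one, smul_eq_mul,
    mul_inv_cancel_left₀ hε.ne']

lemma abs_setIntegral_c0Integrand_sub_kIntegrand_le (hb : 1 ≤ b) (hb' : 0 < b') (hε : 0 ≤ ε) :
    |∫ s in Ioi ε, (c0Integrand b b' s - kIntegrand ε b b' s)| ≤ ε ^ 2 / b' ^ 2 := by
  rw [← norm_eq_abs]
  calc ‖∫ s in Ioi ε, (c0Integrand b b' s - kIntegrand ε b b' s)‖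
      ≤ ∫ s in Ioi ε, ε ^ 2 / (2 * b' ^ 2) * (1 + s ^ 2)⁻¹ := by
        refine norm_integral_le_of_norm_le (integrable_inv_one_add_sq.integrableOn.const_mul _) ?_
        filter_upwards [self_mem_ae_restrict measurableSet_Ioi] with s hs
        have hs₀ : 0 < s := hε.trans_lt hs
        rw [norm_of_nonneg (sub_nonneg.2 (kIntegrand_le_c0Integrand hs₀.le))]
        exact c0Integrand_sub_kIntegrand_le hb hb' hs₀
    _ = ε ^ 2 / (2 * b' ^ 2) * (π / 2 - arctan ε) := by
        rw [integral_const_mul, integral_Ioi_inv_one_add_sq]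
    _ ≤ ε ^ 2 / (2 * b' ^ 2) * 2 := by
        gcongr
        linarith [arctan_nonneg.2 hε, pi_le_four]
    _ = ε ^ 2 / b' ^ 2 := by ring

lemma abs_setIntegral_Ioc_c0Integrand_le (hb : 1 ≤ b) (hb' : 0 < b') (hε : 0 ≤ ε) :
    |∫ s in Ioc 0 ε, c0Integrand b b' s| ≤ ε ^ 2 / b' ^ 2 * ε := by
  have hbound : ∀ s ∈ Ioc 0 ε, ‖c0Integrand b b' s‖ ≤ ε ^ 2 / b' ^ 2 := fun s ⟨hs₀, hsε⟩ ↦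
    calc ‖c0Integrand b b' s‖ = c0Integrand b b' s := norm_of_nonneg (c0Integrand_nonneg hs₀.le)
      _ ≤ s ^ 2 / b' ^ 2 * (1 + s ^ 2)⁻¹ := c0Integrand_le_sq_div hb hb' hs₀.le
      _ ≤ ε ^ 2 / b' ^ 2 * 1 := by
        gcongr
        exact inv_le_one_of_one_le₀ (le_add_of_nonneg_right (sq_nonneg s))
      _ = ε ^ 2 / b' ^ 2 := mul_one _
  simpa [Real.volume_real_Ioc_of_le hε, norm_eq_abs] using
    norm_setIntegral_le_of_norm_le_const (μ := volume) measure_Ioc_lt_top hbound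

lemma abs_setIntegral_kIntegrand_sub_setIntegral_c0Integrand_le (hb : 1 ≤ b) (hb' : 0 < b')
    (hε : 0 ≤ ε) (hε₁ : ε ≤ 1) :
    |(∫ s in Ioi ε, kIntegrand ε b b' s) - ∫ s in Ioi 0, c0Integrand b b' s| ≤
      2 * (ε ^ 2 / b' ^ 2) := by
  have hc := integrableOn_c0Integrand (b' := b') hb
  have hsplit : ∫ s in Ioi 0, c0Integrand b b' s =
      (∫ s in Ioc 0 ε, c0Integrand b b' s) + ∫ s in Ioi ε, c0Integrand b b' s := by
    rw [← setIntegral_union (Ioc_disjoint_Ioi le_rfl) measurableSet_Ioi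
      (hc.mono_set Ioc_subset_Ioi_self) (hc.mono_set (Ioi_subset_Ioi hε)),
      Ioc_union_Ioi_eq_Ioi hε]
  have hdiff : ∫ s in Ioi ε, (c0Integrand b b' s - kIntegrand ε b b' s) =
      (∫ s in Ioi ε, c0Integrand b b' s) - ∫ s in Ioi ε, kIntegrand ε b b' s :=
    integral_sub (hc.mono_set (Ioi_subset_Ioi hε))
      ((integrableOn_kIntegrand hb).mono_set (Ioi_subset_Ioi hε))
  have hA := abs_setIntegral_c0Integrand_sub_kIntegrand_le hb hb' hε
  have hB := abs_setIntegral_Ioc_c0Integrand_le hb hb' hε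
  have hε_cube : ε ^ 2 / b' ^ 2 * ε ≤ ε ^ 2 / b' ^ 2 := mul_le_of_le_one_right (by positivity) hε₁
  rw [hsplit, abs_le]
  rw [hdiff, abs_le] at hA
  rw [abs_le] at hB
  constructor <;> linarith [hA.1, hA.2, hB.1, hB.2]

end Integrals

lemma log_sub_log_div_sq_sub_sq_nonneg_s10 {b b' : ℝ} (hb' : 0 < b') (h : b' ≤ b) :
    0 ≤ (log b - log b') / (b ^ 2 - b' ^ 2) :=
  div_nonneg (sub_nonneg.2 (log_le_log hb' h)) (sub_nonneg.2 (pow_le_pow_left₀ hb'.le h 2))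

/-- For `b ≥ b' > e` and `ε ∈ (0, 1/2)`,
`K⁻(ε;b,b') = ∫₁^∞ ε²t²(1 - e^{-εt})/(√(1+t²)(ε²t² + b²)(ε²t² + b'²)) dt` satisfies
`|K⁻(ε;b,b') - C₀⁻(b,b')| ≤ C ε² ((log b - log b')/(b² - b'²) + b'^{-2})` for an absolute
constant `C`, where `C₀⁻(b,b') = ∫₀^∞ t(1 - e^{-t})/((t²+b²)(t²+b'²)) dt` and for `b = b'`
the factor `(log b - log b')/(b² - b'²)` is interpreted as `1/(2b²)`. -/
theorem stmt_10 :
    ∃ C : ℝ, 0 < C ∧ ∀ b b' : ℝ, b' ≤ b → Real.exp 1 < b' → ∀ ε : ℝ, 0 < ε → ε < 1 / 2 →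
      |(∫ t in Ioi (1 : ℝ),
          ε ^ 2 * t ^ 2 * (1 - Real.exp (-(ε * t))) /
            (Real.sqrt (1 + t ^ 2) * (ε ^ 2 * t ^ 2 + b ^ 2) * (ε ^ 2 * t ^ 2 + b' ^ 2))) -
        ∫ t in Ioi (0 : ℝ),
          t * (1 - Real.exp (-t)) / ((t ^ 2 + b ^ 2) * (t ^ 2 + b' ^ 2))| ≤
      C * ε ^ 2 *
        ((if b = b' then 1 / (2 * b ^ 2)
          else (Real.log b - Real.log b') / (b ^ 2 - b' ^ 2)) + 1 / b' ^ 2) := by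
  refine ⟨2, two_pos, fun b b' hbb' hb' ε hε hε_half ↦ ?_⟩
  have hb'₁ : 1 < b' := (one_lt_exp_iff.2 one_pos).trans hb'
  have hlog : 0 ≤ if b = b' then 1 / (2 * b ^ 2)
      else (log b - log b') / (b ^ 2 - b' ^ 2) := by
    split_ifs
    · positivity
    · exact log_sub_log_div_sq_sub_sq_nonneg_s10 (by linarith) hbb'
  rw [setIntegral_Ioi_one_rescale hε]
  calc _ ≤ 2 * (ε ^ 2 / b' ^ 2) :=
        abs_setIntegral_kIntegrand_sub_setIntegral_c0Integrand_le (hb'₁.le.trans hbb')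
          (by linarith) hε.le (by linarith)
    _ ≤ _ := by
        rw [mul_div_assoc', div_eq_mul_one_div]
        exact mul_le_mul_of_nonneg_left (le_add_of_nonneg_left hlog) (by positivity)
end

section
/- For every positive integer m and every ε ∈ (0, 1/2), the integral I₇(ε) = ∫₁^∞ ε³ t³ / (√(1+t²)(ε²t² + π²m²)²) dt satisfies |I₇(ε) − 1/(4m)| ≤ C ε² / m³ for an absolute constant C independent of m and ε. -/
/-!
Write `a = πm` and `g t = ε³t² / (ε²t² + a²)²`. The substitution `u = εt / a` turns
`∫₀^∞ g` into `(1 / a) ∫₀^∞ u² / (1 + u²)² = π / (4a) = 1 / (4m)`, via the antiderivative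
`(arctan u - u / (1 + u²)) / 2`. The integrand of `I₇` is `t / √(1 + t²) · g t`, and
`1 - t / √(1 + t²) ≤ 1 / (2t²)`, so on `(1, ∞)` it differs from `g` by at most `ε² / (2a²)` times
the Lorentzian `ε / (ε²t² + a²)`, whose integral over `ℝ` is `π / a`. The remaining piece
`∫₀¹ g` is at most `ε³ / a⁴`.
-/

open Real MeasureTheory Set Filter Topology

theorem hasDerivAt_arctan_sub_div_one_add_sq (u : ℝ) :
    HasDerivAt (fun u => (arctan u - u / (1 + u ^ 2)) / 2) (u ^ 2 / (1 + u ^ 2) ^ 2) u := by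
  have hd : 1 + u ^ 2 ≠ 0 := by positivity
  have hq : HasDerivAt (fun u : ℝ => 1 + u ^ 2) (2 * u) u := by
    simpa using (hasDerivAt_pow 2 u).const_add 1
  refine (((hasDerivAt_arctan u).sub ((hasDerivAt_id' u).div hq hd)).div_const 2).congr_deriv ?_
  field_simp
  ring

theorem tendsto_div_one_add_sq_atTop : Tendsto (fun u : ℝ => u / (1 + u ^ 2)) atTop (𝓝 0) := by
  refine tendsto_of_tendsto_of_tendsto_of_le_of_le' tendsto_const_nhds
    tendsto_inv_atTop_zero ?_ ?_ <;>
    filter_upwards [eventually_gt_atTop 0] with u hu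
  · positivity
  · rw [div_le_iff₀ (by positivity), inv_mul_eq_div, le_div_iff₀ hu]
    nlinarith

theorem integral_Ioi_zero_sq_div_one_add_sq_sq :
    ∫ u in Ioi (0 : ℝ), u ^ 2 / (1 + u ^ 2) ^ 2 = π / 4 := by
  have hlim : Tendsto (fun u => (arctan u - u / (1 + u ^ 2)) / 2) atTop (𝓝 ((π / 2 - 0) / 2)) :=
    ((tendsto_nhds_of_tendsto_nhdsWithin tendsto_arctan_atTop).sub
      tendsto_div_one_add_sq_atTop).div_const 2
  rw [integral_Ioi_of_hasDerivAt_of_nonneg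
    (hasDerivAt_arctan_sub_div_one_add_sq 0).continuousAt.continuousWithinAt
    (fun u _ => hasDerivAt_arctan_sub_div_one_add_sq u) (fun u _ => by positivity) hlim]
  simp
  ring

theorem abs_div_sqrt_one_add_sq_le_one (t : ℝ) : |t / √(1 + t ^ 2)| ≤ 1 := by
  rw [abs_div, abs_of_nonneg (sqrt_nonneg _)]
  exact div_le_one_of_le₀ (abs_le_sqrt (by linarith)) (sqrt_nonneg _)

theorem one_sub_div_sqrt_one_add_sq_le {t : ℝ} (ht : 0 < t) :
    1 - t / √(1 + t ^ 2) ≤ 1 / (2 * t ^ 2) := by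
  have hs : √(1 + t ^ 2) ^ 2 = 1 + t ^ 2 := sq_sqrt (by positivity)
  have hts : t ≤ √(1 + t ^ 2) := le_sqrt_of_sq_le (by linarith)
  rw [one_sub_div (by positivity), div_le_div_iff₀ (by positivity) (by positivity)]
  -- `√(1 + t²) - t = 1 / (√(1 + t²) + t) ≤ 1 / (2t)`
  nlinarith [mul_le_mul_of_nonneg_left hts (sub_nonneg.2 hts), mul_pos ht ht]

section

variable {ε a : ℝ}

theorem div_sq_mul_sq_add_sq_eq (ha : a ≠ 0) (t : ℝ) :
    ε / (ε ^ 2 * t ^ 2 + a ^ 2) = ε / a ^ 2 * (1 + (ε / a * t) ^ 2)⁻¹ := by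
  field_simp
  ring

theorem integrable_div_sq_mul_sq_add_sq (hε : ε ≠ 0) (ha : a ≠ 0) :
    Integrable fun t => ε / (ε ^ 2 * t ^ 2 + a ^ 2) := by
  simp_rw [div_sq_mul_sq_add_sq_eq ha]
  exact (integrable_inv_one_add_sq.comp_mul_left' (div_ne_zero hε ha)).const_mul _

theorem integral_div_sq_mul_sq_add_sq (hε : 0 < ε) (ha : 0 < a) :
    ∫ t, ε / (ε ^ 2 * t ^ 2 + a ^ 2) = π / a := by
  simp_rw [div_sq_mul_sq_add_sq_eq ha.ne']
  rw [integral_const_mul, Measure.integral_comp_mul_left (fun u => (1 + u ^ 2)⁻¹),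
    integral_univ_inv_one_add_sq, abs_of_pos (by positivity), smul_eq_mul]
  field_simp

theorem integral_Ioi_zero_cube_mul_sq_div (hε : 0 < ε) (ha : 0 < a) :
    ∫ t in Ioi (0 : ℝ), ε ^ 3 * t ^ 2 / (ε ^ 2 * t ^ 2 + a ^ 2) ^ 2 = π / (4 * a) := by
  have hscale : ∀ t : ℝ, ε ^ 3 * t ^ 2 / (ε ^ 2 * t ^ 2 + a ^ 2) ^ 2 =
      ε / a ^ 2 * ((ε / a * t) ^ 2 / (1 + (ε / a * t) ^ 2) ^ 2) := by
    intro t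
    field_simp
    ring
  simp_rw [hscale]
  rw [integral_const_mul, integral_comp_mul_left_Ioi (fun u => u ^ 2 / (1 + u ^ 2) ^ 2) 0
    (div_pos hε ha), mul_zero, integral_Ioi_zero_sq_div_one_add_sq_sq, smul_eq_mul]
  field_simp

theorem cube_mul_sq_div_le (hε : 0 ≤ ε) (ha : 0 < a) (t : ℝ) :
    ε ^ 3 * t ^ 2 / (ε ^ 2 * t ^ 2 + a ^ 2) ^ 2 ≤ ε / (ε ^ 2 * t ^ 2 + a ^ 2) := by
  rw [div_le_div_iff₀ (by positivity) (by positivity)]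
  have : 0 ≤ ε * (ε ^ 2 * t ^ 2 + a ^ 2) * a ^ 2 := by positivity
  nlinarith

theorem cube_mul_sq_div_le_of_sq_le_one (hε : 0 ≤ ε) (ha : 0 < a) {t : ℝ} (ht : t ^ 2 ≤ 1) :
    ε ^ 3 * t ^ 2 / (ε ^ 2 * t ^ 2 + a ^ 2) ^ 2 ≤ ε ^ 3 / a ^ 4 := by
  rw [show a ^ 4 = (a ^ 2) ^ 2 by ring]
  gcongr
  · exact mul_le_of_le_one_right (by positivity) ht
  · nlinarith [sq_nonneg (ε * t)]

theorem cube_mul_sq_div_sub_le (hε : 0 ≤ ε) (ha : 0 < a) {t : ℝ} (ht : 0 < t) :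
    ε ^ 3 * t ^ 2 / (ε ^ 2 * t ^ 2 + a ^ 2) ^ 2 -
        t / √(1 + t ^ 2) * (ε ^ 3 * t ^ 2 / (ε ^ 2 * t ^ 2 + a ^ 2) ^ 2) ≤
      ε ^ 2 / (2 * a ^ 2) * (ε / (ε ^ 2 * t ^ 2 + a ^ 2)) := by
  have hD : a ^ 2 ≤ ε ^ 2 * t ^ 2 + a ^ 2 := by nlinarith [sq_nonneg (ε * t)]
  calc _ = (1 - t / √(1 + t ^ 2)) * (ε ^ 3 * t ^ 2 / (ε ^ 2 * t ^ 2 + a ^ 2) ^ 2) := by ring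
    _ ≤ 1 / (2 * t ^ 2) * (ε ^ 3 * t ^ 2 / (ε ^ 2 * t ^ 2 + a ^ 2) ^ 2) := by
      gcongr
      exact one_sub_div_sqrt_one_add_sq_le ht
    _ = ε ^ 3 / (2 * (ε ^ 2 * t ^ 2 + a ^ 2) * (ε ^ 2 * t ^ 2 + a ^ 2)) := by
      field_simp
    _ ≤ ε ^ 3 / (2 * a ^ 2 * (ε ^ 2 * t ^ 2 + a ^ 2)) := by gcongr
    _ = _ := by field_simp

theorem integrable_cube_mul_sq_div (hε : 0 < ε) (ha : 0 < a) :
    Integrable fun t => ε ^ 3 * t ^ 2 / (ε ^ 2 * t ^ 2 + a ^ 2) ^ 2 := by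
  refine (integrable_div_sq_mul_sq_add_sq hε.ne' ha.ne').mono'
    (Continuous.aestronglyMeasurable ?_) (ae_of_all _ fun t => ?_)
  · exact continuous_const.mul (continuous_pow 2) |>.div (by fun_prop) fun t => by positivity
  · rw [norm_of_nonneg (by positivity)]
    exact cube_mul_sq_div_le hε.le ha t

theorem integrable_div_sqrt_one_add_sq_mul_cube_mul_sq_div (hε : 0 < ε) (ha : 0 < a) :
    Integrable fun t => t / √(1 + t ^ 2) * (ε ^ 3 * t ^ 2 / (ε ^ 2 * t ^ 2 + a ^ 2) ^ 2) :=
  (integrable_cube_mul_sq_div hε ha).bdd_mul (by fun_prop : Measurable _).aestronglyMeasurable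
    (ae_of_all _ fun t => (norm_eq_abs _).trans_le (abs_div_sqrt_one_add_sq_le_one t))

theorem integral_Ioc_zero_one_cube_mul_sq_div_le (hε : 0 < ε) (ha : 0 < a) :
    ∫ t in Ioc (0 : ℝ) 1, ε ^ 3 * t ^ 2 / (ε ^ 2 * t ^ 2 + a ^ 2) ^ 2 ≤ ε ^ 3 / a ^ 4 := by
  have hbound : ∀ t ∈ Ioc (0 : ℝ) 1,
      ‖ε ^ 3 * t ^ 2 / (ε ^ 2 * t ^ 2 + a ^ 2) ^ 2‖ ≤ ε ^ 3 / a ^ 4 := fun t ht => by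
    rw [norm_of_nonneg (by positivity)]
    exact cube_mul_sq_div_le_of_sq_le_one hε.le ha (by nlinarith [ht.1, ht.2])
  simpa using (le_abs_self _).trans
    (norm_setIntegral_le_of_norm_le_const (μ := volume) measure_Ioc_lt_top hbound)

theorem integral_Ioi_one_cube_mul_sq_div_sub_le (hε : 0 < ε) (ha : 0 < a) :
    ∫ t in Ioi (1 : ℝ), (ε ^ 3 * t ^ 2 / (ε ^ 2 * t ^ 2 + a ^ 2) ^ 2 -
        t / √(1 + t ^ 2) * (ε ^ 3 * t ^ 2 / (ε ^ 2 * t ^ 2 + a ^ 2) ^ 2)) ≤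
      π * ε ^ 2 / (2 * a ^ 3) := by
  have hL := (integrable_div_sq_mul_sq_add_sq hε.ne' ha.ne').const_mul (ε ^ 2 / (2 * a ^ 2))
  calc _ ≤ ∫ t in Ioi (1 : ℝ), ε ^ 2 / (2 * a ^ 2) * (ε / (ε ^ 2 * t ^ 2 + a ^ 2)) := by
        refine setIntegral_mono_on ?_ hL.integrableOn measurableSet_Ioi
          fun t ht => cube_mul_sq_div_sub_le hε.le ha (zero_lt_one.trans ht)
        exact ((integrable_cube_mul_sq_div hε ha).sub
          (integrable_div_sqrt_one_add_sq_mul_cube_mul_sq_div hε ha)).integrableOn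
    _ ≤ ∫ t, ε ^ 2 / (2 * a ^ 2) * (ε / (ε ^ 2 * t ^ 2 + a ^ 2)) :=
        setIntegral_le_integral hL (ae_of_all _ fun t => by positivity)
    _ = π * ε ^ 2 / (2 * a ^ 3) := by
      rw [integral_const_mul, integral_div_sq_mul_sq_add_sq hε ha]
      field_simp

theorem abs_integral_Ioi_one_sub_le (hε : 0 < ε) (ha : 0 < a) :
    |(∫ t in Ioi (1 : ℝ), ε ^ 3 * t ^ 3 / (√(1 + t ^ 2) * (ε ^ 2 * t ^ 2 + a ^ 2) ^ 2)) -
        π / (4 * a)| ≤ ε ^ 3 / a ^ 4 + π * ε ^ 2 / (2 * a ^ 3) := by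
  set g := fun t : ℝ => ε ^ 3 * t ^ 2 / (ε ^ 2 * t ^ 2 + a ^ 2) ^ 2 with hg_def
  have hf : ∀ t : ℝ, ε ^ 3 * t ^ 3 / (√(1 + t ^ 2) * (ε ^ 2 * t ^ 2 + a ^ 2) ^ 2) =
      t / √(1 + t ^ 2) * g t := fun t => by
    rw [hg_def, div_mul_div_comm]
    ring
  have hg := integrable_cube_mul_sq_div hε ha
  have hwg := integrable_div_sqrt_one_add_sq_mul_cube_mul_sq_div hε ha
  have hsplit : π / (4 * a) = (∫ t in Ioc (0 : ℝ) 1, g t) + ∫ t in Ioi (1 : ℝ), g t := by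
    rw [← integral_Ioi_zero_cube_mul_sq_div hε ha, ← Ioc_union_Ioi_eq_Ioi zero_le_one,
      setIntegral_union (Ioc_disjoint_Ioi le_rfl) measurableSet_Ioi hg.integrableOn
        hg.integrableOn]
  have hhead_nonneg : 0 ≤ ∫ t in Ioc (0 : ℝ) 1, g t :=
    setIntegral_nonneg measurableSet_Ioc fun t _ => by positivity
  have htail_nonneg : 0 ≤ ∫ t in Ioi (1 : ℝ), (g t - t / √(1 + t ^ 2) * g t) :=
    setIntegral_nonneg measurableSet_Ioi fun t _ => by
      have hw := (le_abs_self _).trans (abs_div_sqrt_one_add_sq_le_one t)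
      nlinarith [show 0 ≤ g t by positivity]
  have htail := integral_Ioi_one_cube_mul_sq_div_sub_le hε ha
  have hhead := integral_Ioc_zero_one_cube_mul_sq_div_le hε ha
  rw [integral_sub hg.integrableOn hwg.integrableOn] at htail htail_nonneg
  simp_rw [hf]
  rw [abs_le]
  constructor <;> linarith

end

/-- For every positive integer `m` and `ε ∈ (0, 1/2)`, the integral
`I₇(ε) = ∫₁^∞ ε³t³/(√(1+t²)(ε²t² + π²m²)²) dt` satisfies
`|I₇(ε) - 1/(4m)| ≤ C ε²/m³` for an absolute constant `C`. -/
theorem stmt_11 :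
    ∃ C : ℝ, 0 < C ∧ ∀ m : ℕ, 0 < m → ∀ ε : ℝ, 0 < ε → ε < 1 / 2 →
      |(∫ t in Ioi (1 : ℝ),
          ε ^ 3 * t ^ 3 / (Real.sqrt (1 + t ^ 2) * (ε ^ 2 * t ^ 2 + π ^ 2 * (m : ℝ) ^ 2) ^ 2)) -
        1 / (4 * (m : ℝ))| ≤ C * ε ^ 2 / (m : ℝ) ^ 3 := by
  refine ⟨2, two_pos, fun m hm ε hε hε2 => ?_⟩
  have hm1 : (1 : ℝ) ≤ m := Nat.one_le_cast.2 hm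
  have ha : 0 < π * m := by positivity
  have h := abs_integral_Ioi_one_sub_le hε ha
  rw [mul_pow, show π / (4 * (π * m)) = 1 / (4 * m) by field_simp] at h
  have hhead : ε ^ 3 / (π * m) ^ 4 ≤ ε ^ 2 / (m : ℝ) ^ 3 := by
    have hπm : (m : ℝ) ^ 3 ≤ (π * m) ^ 4 := calc
      (m : ℝ) ^ 3 ≤ (m : ℝ) ^ 4 := pow_le_pow_right₀ hm1 (by norm_num)
      _ ≤ (π * m) ^ 4 := by gcongr; nlinarith [pi_gt_three]
    exact div_le_div₀ (by positivity) (pow_le_pow_of_le_one hε.le (by linarith) (by norm_num))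
      (by positivity) hπm
  have htail : π * ε ^ 2 / (2 * (π * m) ^ 3) ≤ ε ^ 2 / (m : ℝ) ^ 3 := by
    rw [show π * ε ^ 2 / (2 * (π * m) ^ 3) = ε ^ 2 / (2 * π ^ 2 * (m : ℝ) ^ 3) by
      field_simp]
    gcongr
    exact le_mul_of_one_le_left (by positivity) (by nlinarith [pi_gt_three])
  calc _ ≤ _ := h
    _ ≤ ε ^ 2 / (m : ℝ) ^ 3 + ε ^ 2 / (m : ℝ) ^ 3 := add_le_add hhead htail
    _ = 2 * ε ^ 2 / (m : ℝ) ^ 3 := by ring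
end

section
/- Let Δ, k₀ be complex numbers with k₀ = (2m−1)π for a positive integer m, and suppose |Δ| ≤ 1/10. Then the equation e^{iδ} − 1 = Δ/(1 − Δ/2) (for the unknown δ ∈ ℂ with |δ| ≤ 1/2) has a unique solution, and this solution satisfies δ = −i(Δ + Δ³/12) + R with |R| ≤ C|Δ|⁴ for an absolute constant C. -/
open Real Complex

lemma logTaylor_four (u : ℂ) : Complex.logTaylor 4 u = u - u ^ 2 / 2 + u ^ 3 / 3 := by
  simp [Complex.logTaylor_succ, Complex.logTaylor_zero]
  ring

/-- Key estimate: for `‖Δ‖ ≤ 1/10`, with `δ* = -I*(log(1+Δ/2) - log(1-Δ/2))`,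
we have the equation and the cubic expansion. -/
lemma key (Δ : ℂ) (hΔ : ‖Δ‖ ≤ 1 / 10) :
    let δ := -Complex.I * (Complex.log (1 + Δ / 2) - Complex.log (1 - Δ / 2))
    ‖δ‖ ≤ 1 / 2 ∧ Complex.exp (Complex.I * δ) - 1 = Δ / (1 - Δ / 2) ∧
    ‖δ - (-Complex.I * (Δ + Δ ^ 3 / 12))‖ ≤ ‖Δ‖ ^ 4 := by
  intro δ
  set u : ℂ := Δ / 2 with hu
  have hunorm : ‖u‖ ≤ 1 / 20 := by
    rw [hu, norm_div]
    simp only [Complex.norm_ofNat]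
    linarith
  have hu1 : ‖u‖ < 1 := by linarith
  have hnu1 : ‖-u‖ < 1 := by rwa [norm_neg]
  have h1 : (1 : ℂ) + u ≠ 0 := by
    intro h
    have h' : ‖(1 : ℂ)‖ = ‖u‖ := by
      rw [show (1 : ℂ) = -u by linear_combination h, norm_neg]
    rw [norm_one] at h'; linarith
  have h2 : (1 : ℂ) - u ≠ 0 := by
    intro h
    have h' : ‖(1 : ℂ)‖ = ‖u‖ := by
      rw [show (1 : ℂ) = u by linear_combination h]
    rw [norm_one] at h'; linarith
  have hδeq : Complex.I * δ = Complex.log (1 + u) - Complex.log (1 - u) := by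
    simp only [δ, hu]
    ring_nf
    rw [Complex.I_sq]
    ring
  constructor
  · -- norm bound
    have b1 : ‖Complex.log (1 + u)‖ ≤ 3 / 2 * ‖u‖ :=
      Complex.norm_log_one_add_half_le_self (by linarith)
    have b2 : ‖Complex.log (1 - u)‖ ≤ 3 / 2 * ‖u‖ := by
      have := Complex.norm_log_one_add_half_le_self (z := -u)
        (by rw [norm_neg]; linarith)
      rw [← sub_eq_add_neg] at this
      rwa [norm_neg] at this
    calc ‖δ‖ = ‖Complex.I * δ‖ :=
        ((by rw [norm_mul, Complex.norm_I, one_mul] : ‖Complex.I * δ‖ = ‖δ‖)).symm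
      _ = ‖Complex.log (1 + u) - Complex.log (1 - u)‖ := by rw [hδeq]
      _ ≤ ‖Complex.log (1 + u)‖ + ‖Complex.log (1 - u)‖ := norm_sub_le _ _
      _ ≤ 3 / 2 * ‖u‖ + 3 / 2 * ‖u‖ := by linarith
      _ ≤ 1 / 2 := by linarith
  constructor
  · -- equation
    rw [hδeq, Complex.exp_sub, Complex.exp_log h1, Complex.exp_log h2]
    have h3 : (2 : ℂ) - Δ ≠ 0 := by
      intro h
      have h' : ‖(2 : ℂ)‖ = ‖Δ‖ := by
        rw [show (2 : ℂ) = Δ by linear_combination h]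
      rw [Complex.norm_ofNat] at h'; linarith
    rw [hu] at h2 ⊢
    field_simp
    ring
  · -- expansion
    have e1 := Complex.norm_log_sub_logTaylor_le 3 hu1
    have e2 := Complex.norm_log_sub_logTaylor_le 3 hnu1
    rw [logTaylor_four] at e1
    rw [logTaylor_four, ← sub_eq_add_neg] at e2
    rw [show ‖-u‖ = ‖u‖ from norm_neg u] at e2
    have hb : (1 - ‖u‖)⁻¹ ≤ 2 := by
      rw [inv_le_comm₀ (by linarith) (by norm_num)]
      linarith
    have hun : (0:ℝ) ≤ ‖u‖ := norm_nonneg _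
    have hbb : ‖u‖ ^ 4 * (1 - ‖u‖)⁻¹ ≤ ‖u‖ ^ 4 * 2 :=
      mul_le_mul_of_nonneg_left hb (pow_nonneg hun 4)
    have e1' : ‖Complex.log (1 + u) - (u - u ^ 2 / 2 + u ^ 3 / 3)‖ ≤ ‖u‖ ^ 4 / 2 := by
      refine e1.trans ?_
      push_cast
      linarith
    have e2' : ‖Complex.log (1 - u) - (-u - (-u) ^ 2 / 2 + (-u) ^ 3 / 3)‖ ≤ ‖u‖ ^ 4 / 2 := by
      refine e2.trans ?_
      push_cast
      linarith
    have key : ‖(Complex.log (1 + u) - Complex.log (1 - u)) - (Δ + Δ ^ 3 / 12)‖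
        ≤ ‖u‖ ^ 4 := by
      have hid : (Complex.log (1 + u) - Complex.log (1 - u)) - (Δ + Δ ^ 3 / 12)
          = (Complex.log (1 + u) - (u - u ^ 2 / 2 + u ^ 3 / 3))
            - (Complex.log (1 - u) - (-u - (-u) ^ 2 / 2 + (-u) ^ 3 / 3)) := by
        rw [hu]; ring
      rw [hid]
      calc _ ≤ ‖Complex.log (1 + u) - (u - u ^ 2 / 2 + u ^ 3 / 3)‖
              + ‖Complex.log (1 - u) - (-u - (-u) ^ 2 / 2 + (-u) ^ 3 / 3)‖ :=
            norm_sub_le _ _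
        _ ≤ ‖u‖ ^ 4 / 2 + ‖u‖ ^ 4 / 2 := by linarith
        _ = ‖u‖ ^ 4 := by ring
    have hδ' : δ - (-Complex.I * (Δ + Δ ^ 3 / 12))
        = -Complex.I * ((Complex.log (1 + u) - Complex.log (1 - u)) - (Δ + Δ ^ 3 / 12)) := by
      have : δ = -Complex.I * (Complex.log (1 + u) - Complex.log (1 - u)) := by
        have := hδeq
        have h := congrArg (fun z => -Complex.I * z) hδeq
        calc δ = -Complex.I * (Complex.I * δ) := by
                  rw [← mul_assoc]
                  simp [Complex.I_mul_I]
          _ = -Complex.I * (Complex.log (1 + u) - Complex.log (1 - u)) := by rw [hδeq]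
      rw [this]; ring
    rw [hδ', norm_mul, norm_neg, Complex.norm_I, one_mul]
    refine key.trans ?_
    have : ‖u‖ ^ 4 ≤ ‖Δ‖ ^ 4 := by
      gcongr
      rw [hu, norm_div]
      simp only [Complex.norm_ofNat]
      nlinarith [norm_nonneg Δ]
    linarith

/-- For `|Δ| ≤ 1/10` (with `k₀ = (2m-1)π` a Fabry–Pérot frequency), the equation
`e^{iδ} - 1 = Δ/(1 - Δ/2)` has a unique solution `δ` with `|δ| ≤ 1/2`, and this solution
satisfies `δ = -i(Δ + Δ³/12) + R` with `|R| ≤ C|Δ|⁴` for an absolute constant `C`. -/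
theorem stmt_17 :
    ∃ C : ℝ, 0 < C ∧ ∀ (m : ℕ), 0 < m → ∀ (k₀ Δ : ℂ),
      k₀ = ((2 * m - 1 : ℝ) * π : ℝ) → ‖Δ‖ ≤ 1 / 10 →
      (∃! δ : ℂ, ‖δ‖ ≤ 1 / 2 ∧ Complex.exp (Complex.I * δ) - 1 = Δ / (1 - Δ / 2)) ∧
      ∀ δ : ℂ, ‖δ‖ ≤ 1 / 2 → Complex.exp (Complex.I * δ) - 1 = Δ / (1 - Δ / 2) →
        ‖δ - (-Complex.I * (Δ + Δ ^ 3 / 12))‖ ≤ C * ‖Δ‖ ^ 4 := by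
  refine ⟨1, one_pos, fun m _ k₀ Δ _ hΔ => ?_⟩
  obtain ⟨hnorm, heq, hexp⟩ := key Δ hΔ
  set δ₀ := -Complex.I * (Complex.log (1 + Δ / 2) - Complex.log (1 - Δ / 2)) with hδ₀
  -- uniqueness of solutions in the disk
  have uniq : ∀ δ : ℂ, ‖δ‖ ≤ 1 / 2 → Complex.exp (Complex.I * δ) - 1 = Δ / (1 - Δ / 2) →
      δ = δ₀ := by
    intro δ hδn hδe
    have hee : Complex.exp (Complex.I * δ) = Complex.exp (Complex.I * δ₀) := by
      have := heq
      rw [sub_eq_iff_eq_add] at hδe this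
      rw [hδe, this]
    rw [Complex.exp_eq_exp_iff_exists_int] at hee
    obtain ⟨n, hn⟩ := hee
    have hn0 : n = 0 := by
      by_contra h
      have h1 : (1:ℝ) ≤ |(n:ℝ)| := by
        rw [← Int.cast_abs]
        exact_mod_cast Int.one_le_abs (by omega)
      have this : ‖Complex.I * δ - Complex.I * δ₀‖ = |(n:ℝ)| * (2 * π) := by
        rw [show Complex.I * δ - Complex.I * δ₀ = (n : ℂ) * (2 * (π:ℂ) * Complex.I) by
          rw [hn]; ring]
        rw [norm_mul, norm_mul, norm_mul, Complex.norm_I, mul_one,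
          ← Complex.ofReal_intCast, Complex.norm_real, Real.norm_eq_abs,
          Complex.norm_ofNat, Complex.norm_real, Real.norm_eq_abs,
          abs_of_pos Real.pi_pos]
      have hπ : (3:ℝ) ≤ π := by
        have := Real.pi_gt_three
        linarith
      have hle : ‖Complex.I * δ - Complex.I * δ₀‖ ≤ 1 := by
        calc ‖Complex.I * δ - Complex.I * δ₀‖ ≤ ‖Complex.I * δ‖ + ‖Complex.I * δ₀‖ :=
              norm_sub_le _ _
          _ = ‖δ‖ + ‖δ₀‖ := by rw [norm_mul, norm_mul, Complex.norm_I, one_mul, one_mul]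
          _ ≤ 1 := by linarith
      rw [this] at hle
      nlinarith [abs_nonneg (n:ℝ)]
    rw [hn0] at hn
    simp only [Int.cast_zero, zero_mul, add_zero] at hn
    exact mul_left_cancel₀ Complex.I_ne_zero hn
  refine ⟨⟨δ₀, ⟨hnorm, heq⟩, fun δ hδ => uniq δ hδ.1 hδ.2⟩, fun δ hδn hδe => ?_⟩
  rw [uniq δ hδn hδe, one_mul]
  exact hexp
end

section
/- For every positive integer n and real ε ∈ (0,1), ∫₀^1 (1 − e^{iεξ})/(√(1−ξ²)(ε²ξ² − π²n²)) dξ = iε/(π²n²)·c + r, where c = ∫₀^1 ξ/√(1−ξ²) dξ = 1 and |r| ≤ C ε²/n² for an absolute constant C. -/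
open Real MeasureTheory Set

/-!
Write `P = π²n²` and `t = εξ`, so `|t| ≤ 1` and `P ≥ 2`. Pointwise, `(1 - e^{it})/(t² - P)` differs
from its linearisation `it/P` by `O(t²/P)`: the Taylor remainder `|e^{it} - 1 - it| ≤ t²` over
`|t² - P| ≥ P/2`, plus the correction `it · t²/((t² - P)P)`. Integrated against the arcsine
weight `1/√(1 - ξ²)`, of mass `π/2` on `(0,1)`, the remainder is at most `(2/π) ε²/n²`, while the
linear term integrates to `iε/P · ∫ ξ/√(1 - ξ²) = iε/P`; both weight integrals follow from the
fundamental theorem of calculus with primitives `-√(1 - ξ²)` and `arcsin`, whose derivatives are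
nonnegative and hence integrable.
-/

theorem integrableOn_Ioo_deriv_of_nonneg {g g' : ℝ → ℝ} {a b : ℝ}
    (hcont : ContinuousOn g (Icc a b)) (hderiv : ∀ x ∈ Ioo a b, HasDerivAt g (g' x) x)
    (hpos : ∀ x ∈ Ioo a b, 0 ≤ g' x) : IntegrableOn g' (Ioo a b) :=
  (intervalIntegral.integrableOn_deriv_of_nonneg hcont hderiv hpos).mono_set Ioo_subset_Ioc_self

theorem integral_Ioo_eq_sub_of_hasDerivAt_of_nonneg {g g' : ℝ → ℝ} {a b : ℝ} (hab : a ≤ b)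
    (hcont : ContinuousOn g (Icc a b)) (hderiv : ∀ x ∈ Ioo a b, HasDerivAt g (g' x) x)
    (hpos : ∀ x ∈ Ioo a b, 0 ≤ g' x) : ∫ x in Ioo a b, g' x = g b - g a := by
  rw [← integral_Ioc_eq_integral_Ioo, ← intervalIntegral.integral_of_le hab]
  exact intervalIntegral.integral_eq_sub_of_hasDerivAt_of_le hab hcont hderiv
    ((intervalIntegrable_iff_integrableOn_Ioc_of_le hab).2
      (intervalIntegral.integrableOn_deriv_of_nonneg hcont hderiv hpos))

theorem hasDerivAt_neg_sqrt_one_sub_sq {x : ℝ} (hx : x ^ 2 < 1) :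
    HasDerivAt (fun x => -√(1 - x ^ 2)) (x / √(1 - x ^ 2)) x := by
  have hpos : 0 < 1 - x ^ 2 := by linarith
  refine (((hasDerivAt_pow 2 x).const_sub 1).sqrt hpos.ne').neg.congr_deriv ?_
  have : √(1 - x ^ 2) ≠ 0 := (Real.sqrt_pos.2 hpos).ne'
  field_simp
  norm_num

theorem sq_lt_one_of_mem_Ioo {x : ℝ} (hx : x ∈ Ioo (0 : ℝ) 1) : x ^ 2 < 1 := by
  nlinarith [hx.1, hx.2]

theorem integrableOn_div_sqrt_one_sub_sq :
    IntegrableOn (fun ξ : ℝ => ξ / √(1 - ξ ^ 2)) (Ioo 0 1) :=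
  integrableOn_Ioo_deriv_of_nonneg (by fun_prop)
    (fun _ hx => hasDerivAt_neg_sqrt_one_sub_sq (sq_lt_one_of_mem_Ioo hx))
    (fun _ hx => div_nonneg hx.1.le (Real.sqrt_nonneg _))

theorem integral_div_sqrt_one_sub_sq : ∫ ξ in Ioo (0 : ℝ) 1, ξ / √(1 - ξ ^ 2) = 1 := by
  rw [integral_Ioo_eq_sub_of_hasDerivAt_of_nonneg zero_le_one (by fun_prop)
    (fun _ hx => hasDerivAt_neg_sqrt_one_sub_sq (sq_lt_one_of_mem_Ioo hx))
    (fun _ hx => div_nonneg hx.1.le (Real.sqrt_nonneg _))]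
  norm_num

theorem hasDerivAt_arcsin_of_mem_Ioo {x : ℝ} (hx : x ∈ Ioo (0 : ℝ) 1) :
    HasDerivAt arcsin (1 / √(1 - x ^ 2)) x :=
  hasDerivAt_arcsin (by linarith [hx.1]) hx.2.ne

theorem integrableOn_one_div_sqrt_one_sub_sq :
    IntegrableOn (fun ξ : ℝ => 1 / √(1 - ξ ^ 2)) (Ioo 0 1) :=
  integrableOn_Ioo_deriv_of_nonneg continuous_arcsin.continuousOn
    (fun _ hx => hasDerivAt_arcsin_of_mem_Ioo hx) (fun _ _ => by positivity)

theorem integral_one_div_sqrt_one_sub_sq : ∫ ξ in Ioo (0 : ℝ) 1, 1 / √(1 - ξ ^ 2) = π / 2 := by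
  rw [integral_Ioo_eq_sub_of_hasDerivAt_of_nonneg zero_le_one continuous_arcsin.continuousOn
    (fun _ hx => hasDerivAt_arcsin_of_mem_Ioo hx) (fun _ _ => by positivity)]
  simp

section Weighted

variable {G : ℝ → ℂ} {K : ℝ}

theorem integrableOn_div_sqrt_one_sub_sq_of_norm_le
    (hG : AEStronglyMeasurable G (volume.restrict (Ioo 0 1)))
    (hK : ∀ ξ ∈ Ioo (0 : ℝ) 1, ‖G ξ‖ ≤ K) :
    IntegrableOn (fun ξ => G ξ / (√(1 - ξ ^ 2) : ℂ)) (Ioo 0 1) := by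
  have hw : IntegrableOn (fun ξ : ℝ => ((1 / √(1 - ξ ^ 2) : ℝ) : ℂ)) (Ioo 0 1) :=
    integrableOn_one_div_sqrt_one_sub_sq.ofReal
  refine IntegrableOn.congr_fun (hw.bdd_mul hG ((ae_restrict_mem measurableSet_Ioo).mono hK))
    (fun ξ _ => ?_) measurableSet_Ioo
  simp [div_eq_mul_inv]

theorem norm_integral_div_sqrt_one_sub_sq_le (hK : ∀ ξ ∈ Ioo (0 : ℝ) 1, ‖G ξ‖ ≤ K) :
    ‖∫ ξ in Ioo (0 : ℝ) 1, G ξ / (√(1 - ξ ^ 2) : ℂ)‖ ≤ K * (π / 2) := by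
  rw [← integral_one_div_sqrt_one_sub_sq, ← integral_const_mul]
  refine norm_integral_le_of_norm_le (integrableOn_one_div_sqrt_one_sub_sq.const_mul K) ?_
  filter_upwards [ae_restrict_mem measurableSet_Ioo] with ξ hξ
  rw [norm_div, Complex.norm_real, Real.norm_eq_abs, abs_of_nonneg (Real.sqrt_nonneg _),
    mul_one_div]
  exact div_le_div_of_nonneg_right (hK ξ hξ) (Real.sqrt_nonneg _)

end Weighted

section Pointwise

open Complex

theorem half_le_abs_sq_sub {t P : ℝ} (ht : |t| ≤ 1) (hP : 2 ≤ P) : P / 2 ≤ |t ^ 2 - P| := by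
  have : t ^ 2 ≤ 1 := by nlinarith [sq_abs t, abs_nonneg t]
  rw [abs_of_neg (by linarith)]
  linarith

theorem norm_one_sub_exp_div_sq_sub_le {t P : ℝ} (ht : |t| ≤ 1) (hP : 2 ≤ P) :
    ‖(1 - exp (I * t)) / ((t ^ 2 - P : ℝ) : ℂ)‖ ≤ 2 / P := by
  have hD := half_le_abs_sq_sub ht hP
  have hnum : ‖1 - exp (I * t)‖ ≤ 1 := by
    rw [norm_sub_rev]
    exact norm_exp_I_mul_ofReal_sub_one_le.trans (by rwa [Real.norm_eq_abs])
  rw [norm_div, norm_real, Real.norm_eq_abs]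
  calc ‖1 - exp (I * t)‖ / |t ^ 2 - P| ≤ 1 / (P / 2) :=
        div_le_div₀ zero_le_one hnum (by positivity) hD
    _ = 2 / P := by ring

theorem norm_one_sub_exp_div_sq_sub_sub_le {t P : ℝ} (ht : |t| ≤ 1) (hP : 2 ≤ P) :
    ‖(1 - exp (I * t)) / ((t ^ 2 - P : ℝ) : ℂ) - I * t / P‖ ≤ 4 * t ^ 2 / P := by
  set D := t ^ 2 - P with hD_def
  have hD := half_le_abs_sq_sub ht hP
  have hD0 : (D : ℂ) ≠ 0 := ofReal_ne_zero.2 (abs_pos.1 (by linarith))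
  have hP0 : (P : ℂ) ≠ 0 := ofReal_ne_zero.2 (by linarith)
  have hIt : ‖I * t‖ = |t| := by simp
  have hsplit : (1 - exp (I * t)) / (D : ℂ) - I * t / P =
      -(exp (I * t) - 1 - I * t) / D - I * t * t ^ 2 / (D * P) := by
    field_simp
    push_cast [hD_def]
    ring
  have htaylor : ‖exp (I * t) - 1 - I * t‖ ≤ t ^ 2 := by
    simpa [hIt, sq_abs] using norm_exp_sub_one_sub_id_le (hIt.trans_le ht)
  rw [hsplit]
  calc _ ≤ ‖-(exp (I * t) - 1 - I * t) / D‖ + ‖I * t * t ^ 2 / (D * P)‖ := norm_sub_le _ _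
    _ ≤ t ^ 2 / (P / 2) + 1 * t ^ 2 / (P / 2 * 1) := by
        simp only [norm_div, norm_neg, norm_mul, hIt, norm_real, Real.norm_eq_abs, norm_pow,
          sq_abs]
        gcongr
        · rw [abs_of_pos (by linarith)]; linarith
    _ = 4 * t ^ 2 / P := by ring

end Pointwise

theorem norm_integral_one_sub_exp_div_sub_le {ε P : ℝ} (hε : |ε| ≤ 1) (hP : 2 ≤ P) :
    ‖(∫ ξ in Ioo (0 : ℝ) 1, (1 - Complex.exp (Complex.I * ε * ξ)) /
        ((√(1 - ξ ^ 2) : ℂ) * ((ε ^ 2 * ξ ^ 2 - P : ℝ) : ℂ))) - Complex.I * ε / P‖ ≤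
      4 * ε ^ 2 / P * (π / 2) := by
  have ht : ∀ ξ ∈ Ioo (0 : ℝ) 1, |ε * ξ| ≤ 1 := fun ξ hξ => by
    rw [abs_mul, abs_of_pos hξ.1]
    exact mul_le_one₀ hε hξ.1.le hξ.2.le
  set G : ℝ → ℂ := fun ξ => (1 - Complex.exp (Complex.I * ε * ξ)) / ((ε ^ 2 * ξ ^ 2 - P : ℝ) : ℂ)
  have hG : AEStronglyMeasurable G (volume.restrict (Ioo 0 1)) :=
    (by fun_prop : Measurable G).aestronglyMeasurable
  have hf : IntegrableOn (fun ξ : ℝ => (1 - Complex.exp (Complex.I * ε * ξ)) /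
      ((√(1 - ξ ^ 2) : ℂ) * ((ε ^ 2 * ξ ^ 2 - P : ℝ) : ℂ))) (Ioo 0 1) := by
    refine (integrableOn_div_sqrt_one_sub_sq_of_norm_le (K := 2 / P) hG fun ξ hξ => ?_).congr_fun
      (fun ξ _ => by simp only [G]; ring) measurableSet_Ioo
    simpa only [G, Complex.ofReal_mul, mul_pow, mul_assoc] using
      norm_one_sub_exp_div_sq_sub_le (ht ξ hξ) hP
  have hg : IntegrableOn (fun ξ : ℝ => ((ξ / √(1 - ξ ^ 2) : ℝ) : ℂ) * (Complex.I * ε / P))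
      (Ioo 0 1) :=
    integrableOn_div_sqrt_one_sub_sq.ofReal.mul_const _
  have hg_integral : ∫ ξ in Ioo (0 : ℝ) 1, ((ξ / √(1 - ξ ^ 2) : ℝ) : ℂ) * (Complex.I * ε / P) =
      Complex.I * ε / P := by
    rw [integral_mul_const, integral_complex_ofReal, integral_div_sqrt_one_sub_sq,
      Complex.ofReal_one, one_mul]
  rw [← hg_integral, ← integral_sub hf hg]
  calc _ = ‖∫ ξ in Ioo (0 : ℝ) 1, (G ξ - Complex.I * ε * ξ / P) / (√(1 - ξ ^ 2) : ℂ)‖ := by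
        congr 1
        refine setIntegral_congr_fun measurableSet_Ioo fun ξ _ => ?_
        simp only [G, Complex.ofReal_div]
        ring
    _ ≤ 4 * ε ^ 2 / P * (π / 2) := by
        refine norm_integral_div_sqrt_one_sub_sq_le fun ξ hξ => ?_
        have key := norm_one_sub_exp_div_sq_sub_sub_le (ht ξ hξ) hP
        simp only [G, Complex.ofReal_mul, mul_pow, mul_assoc] at key ⊢
        refine key.trans ?_
        gcongr
        exact mul_le_of_le_one_right (sq_nonneg ε) (sq_lt_one_of_mem_Ioo hξ).le

/-- For every positive integer `n` and `ε ∈ (0,1)`,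
`∫₀^1 (1 - e^{iεξ})/(√(1-ξ²)(ε²ξ² - π²n²)) dξ = iε/(π²n²)·c + r` where
`c = ∫₀^1 ξ/√(1-ξ²) dξ = 1` and `|r| ≤ C ε²/n²` for an absolute constant `C`. -/
theorem stmt_19 :
    (∫ ξ in Ioo (0 : ℝ) 1, ξ / Real.sqrt (1 - ξ ^ 2)) = 1 ∧
    ∃ C : ℝ, 0 < C ∧ ∀ n : ℕ, 1 ≤ n → ∀ ε : ℝ, 0 < ε → ε < 1 →
      ‖(∫ ξ in Ioo (0 : ℝ) 1,
          (1 - Complex.exp (Complex.I * ε * ξ)) /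
            ((Real.sqrt (1 - ξ ^ 2) : ℂ) * ((ε ^ 2 * ξ ^ 2 - π ^ 2 * (n : ℝ) ^ 2 : ℝ) : ℂ))) -
        Complex.I * ε / ((π ^ 2 * (n : ℝ) ^ 2 : ℝ) : ℂ)‖ ≤ C * ε ^ 2 / (n : ℝ) ^ 2 := by
  refine ⟨integral_div_sqrt_one_sub_sq, 2 / π, by positivity, fun n hn ε hε hε1 => ?_⟩
  have hn2 : (1 : ℝ) ≤ (n : ℝ) ^ 2 := one_le_pow₀ (by exact_mod_cast hn)
  have hP : 2 ≤ π ^ 2 * (n : ℝ) ^ 2 := by nlinarith [pi_gt_three]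
  calc _ ≤ 4 * ε ^ 2 / (π ^ 2 * (n : ℝ) ^ 2) * (π / 2) :=
        norm_integral_one_sub_exp_div_sub_le (abs_le.2 ⟨by linarith, hε1.le⟩) hP
    _ = 2 / π * ε ^ 2 / n ^ 2 := by
        field_simp
        ring
end
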